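/- arXiv:1202.4355 — 2 statements merged into one kernel-verified Lean document; each statement's English description precedes it below -/
import Mathlib

section
/- Let K = ℚ(a) where a⁹ − 3a⁸ + 4a⁷ − a⁶ − 7a⁵ + 11a⁴ − 9a³ + 3a² − a + 1 = 0. Set b = (−90a⁸ + 228a⁷ − 335a⁶ + 205a⁵ + 183a⁴ − 246a³ + 229a² + 49a + 66)/37 and c = (−48a⁸ + 129a⁷ − 117a⁶ − 51a⁵ + 364a⁴ − 368a³ + 169a² − a + 50)/37. Then the point (0,0) on the elliptic curve y² + (1−c)xy − by = x³ − bx² over K has order exactly 31. -/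
set_option maxHeartbeats 4000000

private lemma some_congr' {F : Type} [Field F] {W : WeierstrassCurve.Affine F}
    {x₁ y₁ x₂ y₂ : F} (h₁ : W.Nonsingular x₁ y₁) (h₂ : W.Nonsingular x₂ y₂)
    (hx : x₁ = x₂) (hy : y₁ = y₂) :
    WeierstrassCurve.Affine.Point.some _ _ h₁ = WeierstrassCurve.Affine.Point.some _ _ h₂ := by
  subst hx; subst hy; rfl

open Classical in
/-- The Tate normal form curve E_{b,c} over K = ℚ(a), where a is a root of the stated
polynomial, has the point (0,0) of order exactly 31. -/
theorem stmt_11 (K : Type) [Field K] [CharZero K] (a b c : K)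
    (hpoly : a^9 - 3*a^8 + 4*a^7 - a^6 - 7*a^5 + 11*a^4 - 9*a^3 + 3*a^2 - a + 1 = 0)
    (hgen : IntermediateField.adjoin ℚ {a} = ⊤)
    (hb : b = (-90*a^8 + 228*a^7 - 335*a^6 + 205*a^5 + 183*a^4 - 246*a^3 + 229*a^2 + 49*a + 66)/37)
    (hc : c = (-48*a^8 + 129*a^7 - 117*a^6 - 51*a^5 + 364*a^4 - 368*a^3 + 169*a^2 - a + 50)/37) :
    ∃ h : ({ a₁ := 1 - c, a₂ := -b, a₃ := -b, a₄ := 0, a₆ := 0 } :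
        WeierstrassCurve K).toAffine.Nonsingular 0 0,
      addOrderOf (WeierstrassCurve.Affine.Point.some _ _ h) = 31 := by
  haveI : Fact (Nat.Prime 31) := ⟨by norm_num⟩
  have h1 : (({ a₁ := 1 - c, a₂ := -b, a₃ := -b, a₄ := 0, a₆ := 0 } : WeierstrassCurve K).toAffine).Nonsingular (0 : K) (0 : K) := by
    rw [WeierstrassCurve.Affine.nonsingular_iff, WeierstrassCurve.Affine.equation_iff]
    refine ⟨?_, Or.inr ?_⟩
    · simp only []
      rw [hb, hc]
      linear_combination (0 : K) * hpoly
    · simp only []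
      rw [hb, hc]
      intro h
      exact one_ne_zero (α := K) (by linear_combination (((75)/37)*a^8 + ((-227)/37)*a^7 + ((273)/37)*a^6 + ((8)/37)*a^5 + ((-578)/37)*a^4 + ((760)/37)*a^3 + ((-530)/37)*a^2 + ((101)/37)*a + ((56)/37)) * h + (((-6750)/1369)*a^7 + ((17280)/1369)*a^6 + ((-22611)/1369)*a^5 + ((9241)/1369)*a^4 + ((17776)/1369)*a^3 + ((-17927)/1369)*a^2 + ((14475)/1369)*a + ((5065)/1369)) * hpoly)
  have h2 : (({ a₁ := 1 - c, a₂ := -b, a₃ := -b, a₄ := 0, a₆ := 0 } : WeierstrassCurve K).toAffine).Nonsingular (((-90)/37)*a^8 + ((228)/37)*a^7 + ((-335)/37)*a^6 + ((205)/37)*a^5 + ((183)/37)*a^4 + ((-246)/37)*a^3 + ((229)/37)*a^2 + ((49)/37)*a + ((66)/37)) (((-266)/37)*a^8 + ((701)/37)*a^7 + ((-1171)/37)*a^6 + ((943)/37)*a^5 + ((13)/37)*a^4 + ((-399)/37)*a^3 + ((491)/37)*a^2 + ((144)/37)*a + ((163)/37)) := by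
    rw [WeierstrassCurve.Affine.nonsingular_iff, WeierstrassCurve.Affine.equation_iff]
    refine ⟨?_, Or.inr ?_⟩
    · simp only []
      rw [hb, hc]
      linear_combination (((1149120)/50653)*a^15 + ((-5580324)/50653)*a^14 + ((14433474)/50653)*a^13 + ((-22972584)/50653)*a^12 + ((18616221)/50653)*a^11 + ((1398624)/50653)*a^10 + ((-26897458)/50653)*a^9 + ((33033617)/50653)*a^8 + ((-16292298)/50653)*a^7 + ((-2301236)/50653)*a^6 + ((11231193)/50653)*a^5 + ((-3124949)/50653)*a^4 + ((3052915)/50653)*a^3 + ((1032443)/50653)*a^2 + ((1318289)/50653)*a + ((445153)/50653)) * hpoly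
    · simp only []
      rw [hb, hc]
      intro h
      exact one_ne_zero (α := K) (by linear_combination (((252)/37)*a^8 + ((-964)/37)*a^7 + ((1308)/37)*a^6 + ((-93)/37)*a^5 + ((-2281)/37)*a^4 + ((3412)/37)*a^3 + ((-2395)/37)*a^2 + ((736)/37)*a + ((-22)/37)) * h + (((1088640)/50653)*a^15 + ((-6582168)/50653)*a^14 + ((17409096)/50653)*a^13 + ((-23198532)/50653)*a^12 + ((2904570)/50653)*a^11 + ((47984610)/50653)*a^10 + ((-92511495)/50653)*a^9 + ((81148124)/50653)*a^8 + ((-9820193)/50653)*a^7 + ((-62899868)/50653)*a^6 + ((82317757)/50653)*a^5 + ((-49444947)/50653)*a^4 + ((8459672)/50653)*a^3 + ((8446254)/50653)*a^2 + ((-6023431)/50653)*a + ((243417)/50653)) * hpoly)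
  have h4 : (({ a₁ := 1 - c, a₂ := -b, a₃ := -b, a₄ := 0, a₆ := 0 } : WeierstrassCurve K).toAffine).Nonsingular (((117)/37)*a^8 + ((-585)/37)*a^7 + ((1453)/37)*a^6 + ((-2320)/37)*a^5 + ((2378)/37)*a^4 + ((-1545)/37)*a^3 + ((631)/37)*a^2 + ((-171)/37)*a + ((151)/37)) (((5822)/37)*a^8 + ((-25669)/37)*a^7 + ((59308)/37)*a^6 + ((-88733)/37)*a^5 + ((82951)/37)*a^4 + ((-50948)/37)*a^3 + ((18048)/37)*a^2 + ((-7197)/37)*a + ((4280)/37)) := by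
    rw [WeierstrassCurve.Affine.nonsingular_iff, WeierstrassCurve.Affine.equation_iff]
    refine ⟨?_, Or.inr ?_⟩
    · simp only []
      rw [hb, hc]
      linear_combination (((29862729)/50653)*a^15 + ((-266456736)/50653)*a^14 + ((1170576006)/50653)*a^13 + ((-3335254107)/50653)*a^12 + ((6690710172)/50653)*a^11 + ((-9523327551)/50653)*a^10 + ((8709404842)/50653)*a^9 + ((-1696820379)/50653)*a^8 + ((-10138408268)/50653)*a^7 + ((21017799147)/50653)*a^6 + ((-24540220417)/50653)*a^5 + ((18944818533)/50653)*a^4 + ((-10134506782)/50653)*a^3 + ((3778665744)/50653)*a^2 + ((-1578934870)/50653)*a + ((656989315)/50653)) * hpoly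
    · simp only []
      rw [hb, hc]
      intro h
      exact one_ne_zero (α := K) (by linear_combination (((-151)/37)*a^8 + ((422)/37)*a^7 + ((-634)/37)*a^6 + ((383)/37)*a^5 + ((957)/37)*a^4 + ((-1984)/37)*a^3 + ((1812)/37)*a^2 + ((-525)/37)*a + ((-94)/37)) * h + (((848016)/50653)*a^15 + ((-6345027)/50653)*a^14 + ((23346003)/50653)*a^13 + ((-54863958)/50653)*a^12 + ((83136630)/50653)*a^11 + ((-63283776)/50653)*a^10 + ((-42511921)/50653)*a^9 + ((209082200)/50653)*a^8 + ((-269018668)/50653)*a^7 + ((52903073)/50653)*a^6 + ((451632457)/50653)*a^5 + ((-1007440198)/50653)*a^4 + ((1084976193)/50653)*a^3 + ((-668524970)/50653)*a^2 + ((143364040)/50653)*a + ((29408263)/50653)) * hpoly)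
  have h8 : (({ a₁ := 1 - c, a₂ := -b, a₃ := -b, a₄ := 0, a₆ := 0 } : WeierstrassCurve K).toAffine).Nonsingular (((24)/37)*a^8 + ((-120)/37)*a^7 + ((299)/37)*a^6 + ((-511)/37)*a^5 + ((558)/37)*a^4 + ((-408)/37)*a^3 + ((193)/37)*a^2 + ((-18)/37)*a + ((49)/37)) (((653)/37)*a^8 + ((-3043)/37)*a^7 + ((7292)/37)*a^6 + ((-11278)/37)*a^5 + ((11029)/37)*a^4 + ((-6994)/37)*a^3 + ((2598)/37)*a^2 + ((-906)/37)*a + ((641)/37)) := by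
    rw [WeierstrassCurve.Affine.nonsingular_iff, WeierstrassCurve.Affine.equation_iff]
    refine ⟨?_, Or.inr ?_⟩
    · simp only []
      rw [hb, hc]
      linear_combination (((686592)/50653)*a^15 + ((-6371640)/50653)*a^14 + ((29154432)/50653)*a^13 + ((-87782991)/50653)*a^12 + ((190446192)/50653)*a^11 + ((-306539514)/50653)*a^10 + ((361014730)/50653)*a^9 + ((-274079568)/50653)*a^8 + ((44796850)/50653)*a^7 + ((215614041)/50653)*a^6 + ((-357154205)/50653)*a^5 + ((313396594)/50653)*a^4 + ((-177144946)/50653)*a^3 + ((67352544)/50653)*a^2 + ((-27765706)/50653)*a + ((13269775)/50653)) * hpoly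
    · simp only []
      rw [hb, hc]
      intro h
      exact one_ne_zero (α := K) (by linear_combination (((54)/37)*a^8 + ((-529)/37)*a^7 + ((1237)/37)*a^6 + ((-974)/37)*a^5 + ((-724)/37)*a^4 + ((2856)/37)*a^3 + ((-3238)/37)*a^2 + ((2124)/37)*a + ((-676)/37)) * h + (((-62208)/50653)*a^15 + ((901008)/50653)*a^14 + ((-4920552)/50653)*a^13 + ((15014994)/50653)*a^12 + ((-29226489)/50653)*a^11 + ((34528746)/50653)*a^10 + ((-11465178)/50653)*a^9 + ((-44453186)/50653)*a^8 + ((106032283)/50653)*a^7 + ((-109950955)/50653)*a^6 + ((11953932)/50653)*a^5 + ((138680850)/50653)*a^4 + ((-234392122)/50653)*a^3 + ((205565752)/50653)*a^2 + ((-110531411)/50653)*a + ((30034633)/50653)) * hpoly)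
  have h16 : (({ a₁ := 1 - c, a₂ := -b, a₃ := -b, a₄ := 0, a₆ := 0 } : WeierstrassCurve K).toAffine).Nonsingular (((-22)/37)*a^8 + ((36)/37)*a^7 + ((-12)/37)*a^6 + ((-102)/37)*a^5 + ((247)/37)*a^4 + ((-218)/37)*a^3 + ((153)/37)*a^2 + ((-2)/37)*a + ((63)/37)) (((-2)/37)*a^8 + ((-175)/37)*a^7 + ((601)/37)*a^6 + ((-1237)/37)*a^5 + ((1526)/37)*a^4 + ((-1113)/37)*a^3 + ((505)/37)*a^2 + ((-91)/37)*a + ((147)/37)) := by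
    rw [WeierstrassCurve.Affine.nonsingular_iff, WeierstrassCurve.Affine.equation_iff]
    refine ⟨?_, Or.inr ?_⟩
    · simp only []
      rw [hb, hc]
      linear_combination (((-30800)/50653)*a^15 + ((283908)/50653)*a^14 + ((-1027686)/50653)*a^13 + ((1929410)/50653)*a^12 + ((-1180252)/50653)*a^11 + ((-4052914)/50653)*a^10 + ((13825461)/50653)*a^9 + ((-23218443)/50653)*a^8 + ((24788463)/50653)*a^7 + ((-17107794)/50653)*a^6 + ((6538310)/50653)*a^5 + ((-509082)/50653)*a^4 + ((-452932)/50653)*a^3 + ((144129)/50653)*a^2 + ((-412839)/50653)*a + ((332073)/50653)) * hpoly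
    · simp only []
      rw [hb, hc]
      intro h
      exact one_ne_zero (α := K) (by linear_combination (((-172)/37)*a^8 + ((342)/37)*a^7 + ((71)/37)*a^6 + ((-599)/37)*a^5 + ((589)/37)*a^4 + ((-36)/37)*a^3 + ((-82)/37)*a^2 + ((-93)/37)*a + ((-12)/37)) * h + (((-181632)/50653)*a^15 + ((601608)/50653)*a^14 + ((-295812)/50653)*a^13 + ((-1811058)/50653)*a^12 + ((4832974)/50653)*a^11 + ((-4246952)/50653)*a^10 + ((-2205746)/50653)*a^9 + ((8741783)/50653)*a^8 + ((-8457949)/50653)*a^7 + ((548883)/50653)*a^6 + ((4301488)/50653)*a^5 + ((-3137607)/50653)*a^4 + ((-80703)/50653)*a^3 + ((355879)/50653)*a^2 + ((748942)/50653)*a + ((142057)/50653)) * hpoly)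
  have hy1 : (0 : K) ≠ (({ a₁ := 1 - c, a₂ := -b, a₃ := -b, a₄ := 0, a₆ := 0 } : WeierstrassCurve K).toAffine).negY (0 : K) (0 : K) := by
    simp only [WeierstrassCurve.Affine.negY]
    rw [hb, hc]
    intro h
    exact one_ne_zero (α := K) (by linear_combination (((75)/37)*a^8 + ((-227)/37)*a^7 + ((273)/37)*a^6 + ((8)/37)*a^5 + ((-578)/37)*a^4 + ((760)/37)*a^3 + ((-530)/37)*a^2 + ((101)/37)*a + ((56)/37)) * h + (((-6750)/1369)*a^7 + ((17280)/1369)*a^6 + ((-22611)/1369)*a^5 + ((9241)/1369)*a^4 + ((17776)/1369)*a^3 + ((-17927)/1369)*a^2 + ((14475)/1369)*a + ((5065)/1369)) * hpoly)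
  have hL1 : (({ a₁ := 1 - c, a₂ := -b, a₃ := -b, a₄ := 0, a₆ := 0 } : WeierstrassCurve K).toAffine).slope (0 : K) (0 : K) (0 : K) (0 : K) = (0 : K) := by
    rw [WeierstrassCurve.Affine.slope_of_Y_ne rfl hy1, div_eq_iff (sub_ne_zero_of_ne hy1)]
    simp only [WeierstrassCurve.Affine.negY]
    rw [hb, hc]
    linear_combination (0 : K) * hpoly
  have gx1 : (({ a₁ := 1 - c, a₂ := -b, a₃ := -b, a₄ := 0, a₆ := 0 } : WeierstrassCurve K).toAffine).addX (0 : K) (0 : K) ((({ a₁ := 1 - c, a₂ := -b, a₃ := -b, a₄ := 0, a₆ := 0 } : WeierstrassCurve K).toAffine).slope (0 : K) (0 : K) (0 : K) (0 : K)) = (((-90)/37)*a^8 + ((228)/37)*a^7 + ((-335)/37)*a^6 + ((205)/37)*a^5 + ((183)/37)*a^4 + ((-246)/37)*a^3 + ((229)/37)*a^2 + ((49)/37)*a + ((66)/37)) := by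
    rw [hL1]
    simp only [WeierstrassCurve.Affine.addX]
    rw [hb, hc]
    linear_combination (0 : K) * hpoly
  have gy1 : (({ a₁ := 1 - c, a₂ := -b, a₃ := -b, a₄ := 0, a₆ := 0 } : WeierstrassCurve K).toAffine).addY (0 : K) (0 : K) (0 : K) ((({ a₁ := 1 - c, a₂ := -b, a₃ := -b, a₄ := 0, a₆ := 0 } : WeierstrassCurve K).toAffine).slope (0 : K) (0 : K) (0 : K) (0 : K)) = (((-266)/37)*a^8 + ((701)/37)*a^7 + ((-1171)/37)*a^6 + ((943)/37)*a^5 + ((13)/37)*a^4 + ((-399)/37)*a^3 + ((491)/37)*a^2 + ((144)/37)*a + ((163)/37)) := by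
    rw [hL1]
    simp only [WeierstrassCurve.Affine.addY, WeierstrassCurve.Affine.negAddY, WeierstrassCurve.Affine.addX, WeierstrassCurve.Affine.negY]
    rw [hb, hc]
    linear_combination (((4320)/1369)*a^7 + ((-9594)/1369)*a^6 + ((9960)/1369)*a^5 + ((-2565)/1369)*a^4 + ((-14421)/1369)*a^3 + ((6906)/1369)*a^2 + ((-5675)/1369)*a + ((-2731)/1369)) * hpoly
  have e1 : WeierstrassCurve.Affine.Point.some _ _ h1 + WeierstrassCurve.Affine.Point.some _ _ h1 = WeierstrassCurve.Affine.Point.some _ _ h2 :=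
    (WeierstrassCurve.Affine.Point.add_self_of_Y_ne hy1).trans (some_congr' _ h2 gx1 gy1)
  have hy2 : (((-266)/37)*a^8 + ((701)/37)*a^7 + ((-1171)/37)*a^6 + ((943)/37)*a^5 + ((13)/37)*a^4 + ((-399)/37)*a^3 + ((491)/37)*a^2 + ((144)/37)*a + ((163)/37)) ≠ (({ a₁ := 1 - c, a₂ := -b, a₃ := -b, a₄ := 0, a₆ := 0 } : WeierstrassCurve K).toAffine).negY (((-90)/37)*a^8 + ((228)/37)*a^7 + ((-335)/37)*a^6 + ((205)/37)*a^5 + ((183)/37)*a^4 + ((-246)/37)*a^3 + ((229)/37)*a^2 + ((49)/37)*a + ((66)/37)) (((-266)/37)*a^8 + ((701)/37)*a^7 + ((-1171)/37)*a^6 + ((943)/37)*a^5 + ((13)/37)*a^4 + ((-399)/37)*a^3 + ((491)/37)*a^2 + ((144)/37)*a + ((163)/37)) := by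
    simp only [WeierstrassCurve.Affine.negY]
    rw [hb, hc]
    intro h
    exact one_ne_zero (α := K) (by linear_combination (((252)/37)*a^8 + ((-964)/37)*a^7 + ((1308)/37)*a^6 + ((-93)/37)*a^5 + ((-2281)/37)*a^4 + ((3412)/37)*a^3 + ((-2395)/37)*a^2 + ((736)/37)*a + ((-22)/37)) * h + (((1088640)/50653)*a^15 + ((-6582168)/50653)*a^14 + ((17409096)/50653)*a^13 + ((-23198532)/50653)*a^12 + ((2904570)/50653)*a^11 + ((47984610)/50653)*a^10 + ((-92511495)/50653)*a^9 + ((81148124)/50653)*a^8 + ((-9820193)/50653)*a^7 + ((-62899868)/50653)*a^6 + ((82317757)/50653)*a^5 + ((-49444947)/50653)*a^4 + ((8459672)/50653)*a^3 + ((8446254)/50653)*a^2 + ((-6023431)/50653)*a + ((243417)/50653)) * hpoly)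
  have hL2 : (({ a₁ := 1 - c, a₂ := -b, a₃ := -b, a₄ := 0, a₆ := 0 } : WeierstrassCurve K).toAffine).slope (((-90)/37)*a^8 + ((228)/37)*a^7 + ((-335)/37)*a^6 + ((205)/37)*a^5 + ((183)/37)*a^4 + ((-246)/37)*a^3 + ((229)/37)*a^2 + ((49)/37)*a + ((66)/37)) (((-90)/37)*a^8 + ((228)/37)*a^7 + ((-335)/37)*a^6 + ((205)/37)*a^5 + ((183)/37)*a^4 + ((-246)/37)*a^3 + ((229)/37)*a^2 + ((49)/37)*a + ((66)/37)) (((-266)/37)*a^8 + ((701)/37)*a^7 + ((-1171)/37)*a^6 + ((943)/37)*a^5 + ((13)/37)*a^4 + ((-399)/37)*a^3 + ((491)/37)*a^2 + ((144)/37)*a + ((163)/37)) (((-266)/37)*a^8 + ((701)/37)*a^7 + ((-1171)/37)*a^6 + ((943)/37)*a^5 + ((13)/37)*a^4 + ((-399)/37)*a^3 + ((491)/37)*a^2 + ((144)/37)*a + ((163)/37)) = (((-75)/37)*a^8 + ((190)/37)*a^7 + ((-199)/37)*a^6 + ((-8)/37)*a^5 + ((430)/37)*a^4 + ((-427)/37)*a^3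 + ((234)/37)*a^2 + ((10)/37)*a + ((55)/37)) := by
    rw [WeierstrassCurve.Affine.slope_of_Y_ne rfl hy2, div_eq_iff (sub_ne_zero_of_ne hy2)]
    simp only [WeierstrassCurve.Affine.negY]
    rw [hb, hc]
    linear_combination (((-324000)/50653)*a^15 + ((1540350)/50653)*a^14 + ((-3429540)/50653)*a^13 + ((3959421)/50653)*a^12 + ((546537)/50653)*a^11 + ((-8797245)/50653)*a^10 + ((14018382)/50653)*a^9 + ((-9690017)/50653)*a^8 + ((-2044322)/50653)*a^7 + ((8572015)/50653)*a^6 + ((-8107777)/50653)*a^5 + ((2530441)/50653)*a^4 + ((-1100582)/50653)*a^3 + ((-188879)/50653)*a^2 + ((-482366)/50653)*a + ((-242335)/50653)) * hpoly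
  have gx2 : (({ a₁ := 1 - c, a₂ := -b, a₃ := -b, a₄ := 0, a₆ := 0 } : WeierstrassCurve K).toAffine).addX (((-90)/37)*a^8 + ((228)/37)*a^7 + ((-335)/37)*a^6 + ((205)/37)*a^5 + ((183)/37)*a^4 + ((-246)/37)*a^3 + ((229)/37)*a^2 + ((49)/37)*a + ((66)/37)) (((-90)/37)*a^8 + ((228)/37)*a^7 + ((-335)/37)*a^6 + ((205)/37)*a^5 + ((183)/37)*a^4 + ((-246)/37)*a^3 + ((229)/37)*a^2 + ((49)/37)*a + ((66)/37)) ((({ a₁ := 1 - c, a₂ := -b, a₃ := -b, a₄ := 0, a₆ := 0 } : WeierstrassCurve K).toAffine).slope (((-90)/37)*a^8 + ((228)/37)*a^7 + ((-335)/37)*a^6 + ((205)/37)*a^5 + ((183)/37)*a^4 + ((-246)/37)*a^3 + ((229)/37)*a^2 + ((49)/37)*a + ((66)/37)) (((-90)/37)*a^8 + ((228)/37)*a^7 + ((-335)/37)*a^6 + ((205)/37)*a^5 + ((183)/37)*a^4 + ((-246)/37)*a^3 + ((229)/37)*a^2 + ((49)/37)*a + ((66)/37)) (((-266)/37)*a^8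 + ((701)/37)*a^7 + ((-1171)/37)*a^6 + ((943)/37)*a^5 + ((13)/37)*a^4 + ((-399)/37)*a^3 + ((491)/37)*a^2 + ((144)/37)*a + ((163)/37)) (((-266)/37)*a^8 + ((701)/37)*a^7 + ((-1171)/37)*a^6 + ((943)/37)*a^5 + ((13)/37)*a^4 + ((-399)/37)*a^3 + ((491)/37)*a^2 + ((144)/37)*a + ((163)/37))) = (((117)/37)*a^8 + ((-585)/37)*a^7 + ((1453)/37)*a^6 + ((-2320)/37)*a^5 + ((2378)/37)*a^4 + ((-1545)/37)*a^3 + ((631)/37)*a^2 + ((-171)/37)*a + ((151)/37)) := by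
    rw [hL2]
    simp only [WeierstrassCurve.Affine.addX]
    rw [hb, hc]
    linear_combination (((2025)/1369)*a^7 + ((-3630)/1369)*a^6 + ((4123)/1369)*a^5 + ((-1814)/1369)*a^4 + ((-3949)/1369)*a^3 + ((-1330)/1369)*a^2 + ((-180)/1369)*a + ((-5719)/1369)) * hpoly
  have gy2 : (({ a₁ := 1 - c, a₂ := -b, a₃ := -b, a₄ := 0, a₆ := 0 } : WeierstrassCurve K).toAffine).addY (((-90)/37)*a^8 + ((228)/37)*a^7 + ((-335)/37)*a^6 + ((205)/37)*a^5 + ((183)/37)*a^4 + ((-246)/37)*a^3 + ((229)/37)*a^2 + ((49)/37)*a + ((66)/37)) (((-90)/37)*a^8 + ((228)/37)*a^7 + ((-335)/37)*a^6 + ((205)/37)*a^5 + ((183)/37)*a^4 + ((-246)/37)*a^3 + ((229)/37)*a^2 + ((49)/37)*a + ((66)/37)) (((-266)/37)*a^8 + ((701)/37)*a^7 + ((-1171)/37)*a^6 + ((943)/37)*a^5 + ((13)/37)*a^4 + ((-399)/37)*a^3 + ((491)/37)*a^2 + ((144)/37)*a + ((163)/37)) ((({ a₁ := 1 - c, a₂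 := -b, a₃ := -b, a₄ := 0, a₆ := 0 } : WeierstrassCurve K).toAffine).slope (((-90)/37)*a^8 + ((228)/37)*a^7 + ((-335)/37)*a^6 + ((205)/37)*a^5 + ((183)/37)*a^4 + ((-246)/37)*a^3 + ((229)/37)*a^2 + ((49)/37)*a + ((66)/37)) (((-90)/37)*a^8 + ((228)/37)*a^7 + ((-335)/37)*a^6 + ((205)/37)*a^5 + ((183)/37)*a^4 + ((-246)/37)*a^3 + ((229)/37)*a^2 + ((49)/37)*a + ((66)/37)) (((-266)/37)*a^8 + ((701)/37)*a^7 + ((-1171)/37)*a^6 + ((943)/37)*a^5 + ((13)/37)*a^4 + ((-399)/37)*a^3 + ((491)/37)*a^2 + ((144)/37)*a + ((163)/37)) (((-266)/37)*a^8 + ((701)/37)*a^7 + ((-1171)/37)*a^6 + ((943)/37)*a^5 + ((13)/37)*a^4 + ((-399)/37)*a^3 + ((491)/37)*a^2 + ((144)/37)*a + ((163)/37))) = (((5822)/37)*a^8 + ((-25669)/37)*a^7 + ((59308)/37)*a^6 + ((-88733)/37)*a^5 + ((82951)/37)*a^4 + ((-50948)/37)*a^3 + ((18048)/37)*a^2 +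 ((-7197)/37)*a + ((4280)/37)) := by
    rw [hL2]
    simp only [WeierstrassCurve.Affine.addY, WeierstrassCurve.Affine.negAddY, WeierstrassCurve.Affine.addX, WeierstrassCurve.Affine.negY]
    rw [hb, hc]
    linear_combination (((54675)/50653)*a^15 + ((-221535)/50653)*a^14 + ((498801)/50653)*a^13 + ((-685216)/50653)*a^12 + ((364557)/50653)*a^11 + ((237997)/50653)*a^10 + ((-787459)/50653)*a^9 + ((493970)/50653)*a^8 + ((598415)/50653)*a^7 + ((-1395397)/50653)*a^6 + ((2096318)/50653)*a^5 + ((-1698149)/50653)*a^4 + ((1905788)/50653)*a^3 + ((-2619410)/50653)*a^2 + ((4029062)/50653)*a + ((-5852259)/50653)) * hpoly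
  have e2 : WeierstrassCurve.Affine.Point.some _ _ h2 + WeierstrassCurve.Affine.Point.some _ _ h2 = WeierstrassCurve.Affine.Point.some _ _ h4 :=
    (WeierstrassCurve.Affine.Point.add_self_of_Y_ne hy2).trans (some_congr' _ h4 gx2 gy2)
  have hy4 : (((5822)/37)*a^8 + ((-25669)/37)*a^7 + ((59308)/37)*a^6 + ((-88733)/37)*a^5 + ((82951)/37)*a^4 + ((-50948)/37)*a^3 + ((18048)/37)*a^2 + ((-7197)/37)*a + ((4280)/37)) ≠ (({ a₁ := 1 - c, a₂ := -b, a₃ := -b, a₄ := 0, a₆ := 0 } : WeierstrassCurve K).toAffine).negY (((117)/37)*a^8 + ((-585)/37)*a^7 + ((1453)/37)*a^6 + ((-2320)/37)*a^5 + ((2378)/37)*a^4 + ((-1545)/37)*a^3 + ((631)/37)*a^2 + ((-171)/37)*a + ((151)/37)) (((5822)/37)*a^8 + ((-25669)/37)*a^7 + ((59308)/37)*a^6 + ((-88733)/37)*a^5 + ((82951)/37)*a^4 + ((-50948)/37)*a^3 + ((18048)/37)*a^2 + ((-7197)/37)*a + ((4280)/37)) := by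
    simp only [WeierstrassCurve.Affine.negY]
    rw [hb, hc]
    intro h
    exact one_ne_zero (α := K) (by linear_combination (((-151)/37)*a^8 + ((422)/37)*a^7 + ((-634)/37)*a^6 + ((383)/37)*a^5 + ((957)/37)*a^4 + ((-1984)/37)*a^3 + ((1812)/37)*a^2 + ((-525)/37)*a + ((-94)/37)) * h + (((848016)/50653)*a^15 + ((-6345027)/50653)*a^14 + ((23346003)/50653)*a^13 + ((-54863958)/50653)*a^12 + ((83136630)/50653)*a^11 + ((-63283776)/50653)*a^10 + ((-42511921)/50653)*a^9 + ((209082200)/50653)*a^8 + ((-269018668)/50653)*a^7 + ((52903073)/50653)*a^6 + ((451632457)/50653)*a^5 + ((-1007440198)/50653)*a^4 + ((1084976193)/50653)*a^3 + ((-668524970)/50653)*a^2 + ((143364040)/50653)*a + ((29408263)/50653)) * hpoly)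
  have hL4 : (({ a₁ := 1 - c, a₂ := -b, a₃ := -b, a₄ := 0, a₆ := 0 } : WeierstrassCurve K).toAffine).slope (((117)/37)*a^8 + ((-585)/37)*a^7 + ((1453)/37)*a^6 + ((-2320)/37)*a^5 + ((2378)/37)*a^4 + ((-1545)/37)*a^3 + ((631)/37)*a^2 + ((-171)/37)*a + ((151)/37)) (((117)/37)*a^8 + ((-585)/37)*a^7 + ((1453)/37)*a^6 + ((-2320)/37)*a^5 + ((2378)/37)*a^4 + ((-1545)/37)*a^3 + ((631)/37)*a^2 + ((-171)/37)*a + ((151)/37)) (((5822)/37)*a^8 + ((-25669)/37)*a^7 + ((59308)/37)*a^6 + ((-88733)/37)*a^5 + ((82951)/37)*a^4 + ((-50948)/37)*a^3 + ((18048)/37)*a^2 + ((-7197)/37)*a + ((4280)/37)) (((5822)/37)*a^8 + ((-25669)/37)*a^7 + ((59308)/37)*a^6 + ((-88733)/37)*a^5 + ((82951)/37)*a^4 + ((-50948)/37)*a^3 + ((18048)/37)*a^2 + ((-7197)/37)*a + ((4280)/37)) = (((-29)/37)*a^8 + ((71)/37)*a^7 + ((-36)/37)*a^6 + ((-121)/37)*a^5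 + ((371)/37)*a^4 + ((-358)/37)*a^3 + ((200)/37)*a^2 + ((-6)/37)*a + ((41)/37)) := by
    rw [WeierstrassCurve.Affine.slope_of_Y_ne rfl hy4, div_eq_iff (sub_ne_zero_of_ne hy4)]
    simp only [WeierstrassCurve.Affine.negY]
    rw [hb, hc]
    linear_combination (((162864)/50653)*a^15 + ((-1162161)/50653)*a^14 + ((3737562)/50653)*a^13 + ((-6609231)/50653)*a^12 + ((4082388)/50653)*a^11 + ((11116719)/50653)*a^10 + ((-38002901)/50653)*a^9 + ((62226302)/50653)*a^8 + ((-61440381)/50653)*a^7 + ((26870408)/50653)*a^6 + ((23978911)/50653)*a^5 + ((-60178136)/50653)*a^4 + ((53924674)/50653)*a^3 + ((-31060520)/50653)*a^2 + ((5669038)/50653)*a + ((-8952808)/50653)) * hpoly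
  have gx4 : (({ a₁ := 1 - c, a₂ := -b, a₃ := -b, a₄ := 0, a₆ := 0 } : WeierstrassCurve K).toAffine).addX (((117)/37)*a^8 + ((-585)/37)*a^7 + ((1453)/37)*a^6 + ((-2320)/37)*a^5 + ((2378)/37)*a^4 + ((-1545)/37)*a^3 + ((631)/37)*a^2 + ((-171)/37)*a + ((151)/37)) (((117)/37)*a^8 + ((-585)/37)*a^7 + ((1453)/37)*a^6 + ((-2320)/37)*a^5 + ((2378)/37)*a^4 + ((-1545)/37)*a^3 + ((631)/37)*a^2 + ((-171)/37)*a + ((151)/37)) ((({ a₁ := 1 - c, a₂ := -b, a₃ := -b, a₄ := 0, a₆ := 0 } : WeierstrassCurve K).toAffine).slope (((117)/37)*a^8 + ((-585)/37)*a^7 + ((1453)/37)*a^6 + ((-2320)/37)*a^5 + ((2378)/37)*a^4 + ((-1545)/37)*a^3 + ((631)/37)*a^2 + ((-171)/37)*a + ((151)/37)) (((117)/37)*a^8 + ((-585)/37)*a^7 + ((1453)/37)*a^6 + ((-2320)/37)*a^5 + ((2378)/37)*a^4 + ((-1545)/37)*a^3 + ((631)/37)*a^2 + ((-171)/37)*a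 + ((151)/37)) (((5822)/37)*a^8 + ((-25669)/37)*a^7 + ((59308)/37)*a^6 + ((-88733)/37)*a^5 + ((82951)/37)*a^4 + ((-50948)/37)*a^3 + ((18048)/37)*a^2 + ((-7197)/37)*a + ((4280)/37)) (((5822)/37)*a^8 + ((-25669)/37)*a^7 + ((59308)/37)*a^6 + ((-88733)/37)*a^5 + ((82951)/37)*a^4 + ((-50948)/37)*a^3 + ((18048)/37)*a^2 + ((-7197)/37)*a + ((4280)/37))) = (((24)/37)*a^8 + ((-120)/37)*a^7 + ((299)/37)*a^6 + ((-511)/37)*a^5 + ((558)/37)*a^4 + ((-408)/37)*a^3 + ((193)/37)*a^2 + ((-18)/37)*a + ((49)/37)) := by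
    rw [hL4]
    simp only [WeierstrassCurve.Affine.addX]
    rw [hb, hc]
    linear_combination (((-551)/1369)*a^7 + ((1378)/1369)*a^6 + ((-813)/1369)*a^5 + ((-932)/1369)*a^4 + ((3955)/1369)*a^3 + ((-4907)/1369)*a^2 + ((5363)/1369)*a + ((-9397)/1369)) * hpoly
  have gy4 : (({ a₁ := 1 - c, a₂ := -b, a₃ := -b, a₄ := 0, a₆ := 0 } : WeierstrassCurve K).toAffine).addY (((117)/37)*a^8 + ((-585)/37)*a^7 + ((1453)/37)*a^6 + ((-2320)/37)*a^5 + ((2378)/37)*a^4 + ((-1545)/37)*a^3 + ((631)/37)*a^2 + ((-171)/37)*a + ((151)/37)) (((117)/37)*a^8 + ((-585)/37)*a^7 + ((1453)/37)*a^6 + ((-2320)/37)*a^5 + ((2378)/37)*a^4 + ((-1545)/37)*a^3 + ((631)/37)*a^2 + ((-171)/37)*a + ((151)/37)) (((5822)/37)*a^8 + ((-25669)/37)*a^7 + ((59308)/37)*a^6 + ((-88733)/37)*a^5 + ((82951)/37)*a^4 + ((-50948)/37)*a^3 + ((18048)/37)*a^2 + ((-7197)/37)*a + ((4280)/37)) ((({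 a₁ := 1 - c, a₂ := -b, a₃ := -b, a₄ := 0, a₆ := 0 } : WeierstrassCurve K).toAffine).slope (((117)/37)*a^8 + ((-585)/37)*a^7 + ((1453)/37)*a^6 + ((-2320)/37)*a^5 + ((2378)/37)*a^4 + ((-1545)/37)*a^3 + ((631)/37)*a^2 + ((-171)/37)*a + ((151)/37)) (((117)/37)*a^8 + ((-585)/37)*a^7 + ((1453)/37)*a^6 + ((-2320)/37)*a^5 + ((2378)/37)*a^4 + ((-1545)/37)*a^3 + ((631)/37)*a^2 + ((-171)/37)*a + ((151)/37)) (((5822)/37)*a^8 + ((-25669)/37)*a^7 + ((59308)/37)*a^6 + ((-88733)/37)*a^5 + ((82951)/37)*a^4 + ((-50948)/37)*a^3 + ((18048)/37)*a^2 + ((-7197)/37)*a + ((4280)/37)) (((5822)/37)*a^8 + ((-25669)/37)*a^7 + ((59308)/37)*a^6 + ((-88733)/37)*a^5 + ((82951)/37)*a^4 + ((-50948)/37)*a^3 + ((18048)/37)*a^2 + ((-7197)/37)*a + ((4280)/37))) = (((653)/37)*a^8 + ((-3043)/37)*a^7 + ((7292)/37)*a^6 + ((-11278)/37)*a^5 +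 ((11029)/37)*a^4 + ((-6994)/37)*a^3 + ((2598)/37)*a^2 + ((-906)/37)*a + ((641)/37)) := by
    rw [hL4]
    simp only [WeierstrassCurve.Affine.addY, WeierstrassCurve.Affine.negAddY, WeierstrassCurve.Affine.addX, WeierstrassCurve.Affine.negY]
    rw [hb, hc]
    linear_combination (((10469)/50653)*a^15 + ((-58140)/50653)*a^14 + ((140002)/50653)*a^13 + ((-179634)/50653)*a^12 + ((36969)/50653)*a^11 + ((337069)/50653)*a^10 + ((-763106)/50653)*a^9 + ((1133095)/50653)*a^8 + ((-1436176)/50653)*a^7 + ((1761298)/50653)*a^6 + ((-2041396)/50653)*a^5 + ((1605555)/50653)*a^4 + ((-270495)/50653)*a^3 + ((-1810991)/50653)*a^2 + ((4229531)/50653)*a + ((-6205076)/50653)) * hpoly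
  have e4 : WeierstrassCurve.Affine.Point.some _ _ h4 + WeierstrassCurve.Affine.Point.some _ _ h4 = WeierstrassCurve.Affine.Point.some _ _ h8 :=
    (WeierstrassCurve.Affine.Point.add_self_of_Y_ne hy4).trans (some_congr' _ h8 gx4 gy4)
  have hy8 : (((653)/37)*a^8 + ((-3043)/37)*a^7 + ((7292)/37)*a^6 + ((-11278)/37)*a^5 + ((11029)/37)*a^4 + ((-6994)/37)*a^3 + ((2598)/37)*a^2 + ((-906)/37)*a + ((641)/37)) ≠ (({ a₁ := 1 - c, a₂ := -b, a₃ := -b, a₄ := 0, a₆ := 0 } : WeierstrassCurve K).toAffine).negY (((24)/37)*a^8 + ((-120)/37)*a^7 + ((299)/37)*a^6 + ((-511)/37)*a^5 + ((558)/37)*a^4 + ((-408)/37)*a^3 + ((193)/37)*a^2 + ((-18)/37)*a + ((49)/37)) (((653)/37)*a^8 + ((-3043)/37)*a^7 + ((7292)/37)*a^6 + ((-11278)/37)*a^5 + ((11029)/37)*a^4 + ((-6994)/37)*a^3 + ((2598)/37)*a^2 + ((-906)/37)*a + ((641)/37)) := by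
    simp only [WeierstrassCurve.Affine.negY]
    rw [hb, hc]
    intro h
    exact one_ne_zero (α := K) (by linear_combination (((54)/37)*a^8 + ((-529)/37)*a^7 + ((1237)/37)*a^6 + ((-974)/37)*a^5 + ((-724)/37)*a^4 + ((2856)/37)*a^3 + ((-3238)/37)*a^2 + ((2124)/37)*a + ((-676)/37)) * h + (((-62208)/50653)*a^15 + ((901008)/50653)*a^14 + ((-4920552)/50653)*a^13 + ((15014994)/50653)*a^12 + ((-29226489)/50653)*a^11 + ((34528746)/50653)*a^10 + ((-11465178)/50653)*a^9 + ((-44453186)/50653)*a^8 + ((106032283)/50653)*a^7 + ((-109950955)/50653)*a^6 + ((11953932)/50653)*a^5 + ((138680850)/50653)*a^4 + ((-234392122)/50653)*a^3 + ((205565752)/50653)*a^2 + ((-110531411)/50653)*a + ((30034633)/50653)) * hpoly)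
  have hL8 : (({ a₁ := 1 - c, a₂ := -b, a₃ := -b, a₄ := 0, a₆ := 0 } : WeierstrassCurve K).toAffine).slope (((24)/37)*a^8 + ((-120)/37)*a^7 + ((299)/37)*a^6 + ((-511)/37)*a^5 + ((558)/37)*a^4 + ((-408)/37)*a^3 + ((193)/37)*a^2 + ((-18)/37)*a + ((49)/37)) (((24)/37)*a^8 + ((-120)/37)*a^7 + ((299)/37)*a^6 + ((-511)/37)*a^5 + ((558)/37)*a^4 + ((-408)/37)*a^3 + ((193)/37)*a^2 + ((-18)/37)*a + ((49)/37)) (((653)/37)*a^8 + ((-3043)/37)*a^7 + ((7292)/37)*a^6 + ((-11278)/37)*a^5 + ((11029)/37)*a^4 + ((-6994)/37)*a^3 + ((2598)/37)*a^2 + ((-906)/37)*a + ((641)/37)) (((653)/37)*a^8 + ((-3043)/37)*a^7 + ((7292)/37)*a^6 + ((-11278)/37)*a^5 + ((11029)/37)*a^4 + ((-6994)/37)*a^3 + ((2598)/37)*a^2 + ((-906)/37)*a + ((641)/37)) = (((-25)/37)*a^8 + ((51)/37)*a^7 + ((-17)/37)*a^6 + ((-89)/37)*a^5 + ((242)/37)*a^4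 + ((-204)/37)*a^3 + ((78)/37)*a^2 + ((-9)/37)*a + ((-31)/37)) := by
    rw [WeierstrassCurve.Affine.slope_of_Y_ne rfl hy8, div_eq_iff (sub_ne_zero_of_ne hy8)]
    simp only [WeierstrassCurve.Affine.negY]
    rw [hb, hc]
    linear_combination (((28800)/50653)*a^15 + ((-193752)/50653)*a^14 + ((590784)/50653)*a^13 + ((-1034379)/50653)*a^12 + ((721902)/50653)*a^11 + ((1369377)/50653)*a^10 + ((-5056664)/50653)*a^9 + ((8491895)/50653)*a^8 + ((-8714537)/50653)*a^7 + ((5503656)/50653)*a^6 + ((-1845891)/50653)*a^5 + ((-131041)/50653)*a^4 + ((-767612)/50653)*a^3 + ((1111588)/50653)*a^2 + ((-761147)/50653)*a + ((1710521)/50653)) * hpoly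
  have gx8 : (({ a₁ := 1 - c, a₂ := -b, a₃ := -b, a₄ := 0, a₆ := 0 } : WeierstrassCurve K).toAffine).addX (((24)/37)*a^8 + ((-120)/37)*a^7 + ((299)/37)*a^6 + ((-511)/37)*a^5 + ((558)/37)*a^4 + ((-408)/37)*a^3 + ((193)/37)*a^2 + ((-18)/37)*a + ((49)/37)) (((24)/37)*a^8 + ((-120)/37)*a^7 + ((299)/37)*a^6 + ((-511)/37)*a^5 + ((558)/37)*a^4 + ((-408)/37)*a^3 + ((193)/37)*a^2 + ((-18)/37)*a + ((49)/37)) ((({ a₁ := 1 - c, a₂ := -b, a₃ := -b, a₄ := 0, a₆ := 0 } : WeierstrassCurve K).toAffine).slope (((24)/37)*a^8 + ((-120)/37)*a^7 + ((299)/37)*a^6 + ((-511)/37)*a^5 + ((558)/37)*a^4 + ((-408)/37)*a^3 + ((193)/37)*a^2 + ((-18)/37)*a + ((49)/37)) (((24)/37)*a^8 + ((-120)/37)*a^7 + ((299)/37)*a^6 + ((-511)/37)*a^5 + ((558)/37)*a^4 + ((-408)/37)*a^3 + ((193)/37)*a^2 + ((-18)/37)*a + ((49)/37)) (((653)/37)*a^8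 + ((-3043)/37)*a^7 + ((7292)/37)*a^6 + ((-11278)/37)*a^5 + ((11029)/37)*a^4 + ((-6994)/37)*a^3 + ((2598)/37)*a^2 + ((-906)/37)*a + ((641)/37)) (((653)/37)*a^8 + ((-3043)/37)*a^7 + ((7292)/37)*a^6 + ((-11278)/37)*a^5 + ((11029)/37)*a^4 + ((-6994)/37)*a^3 + ((2598)/37)*a^2 + ((-906)/37)*a + ((641)/37))) = (((-22)/37)*a^8 + ((36)/37)*a^7 + ((-12)/37)*a^6 + ((-102)/37)*a^5 + ((247)/37)*a^4 + ((-218)/37)*a^3 + ((153)/37)*a^2 + ((-2)/37)*a + ((63)/37)) := by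
    rw [hL8]
    simp only [WeierstrassCurve.Affine.addX]
    rw [hb, hc]
    linear_combination (((-575)/1369)*a^7 + ((1398)/1369)*a^6 + ((-375)/1369)*a^5 + ((-1963)/1369)*a^4 + ((4904)/1369)*a^3 + ((-3844)/1369)*a^2 + ((1712)/1369)*a + ((-2151)/1369)) * hpoly
  have gy8 : (({ a₁ := 1 - c, a₂ := -b, a₃ := -b, a₄ := 0, a₆ := 0 } : WeierstrassCurve K).toAffine).addY (((24)/37)*a^8 + ((-120)/37)*a^7 + ((299)/37)*a^6 + ((-511)/37)*a^5 + ((558)/37)*a^4 + ((-408)/37)*a^3 + ((193)/37)*a^2 + ((-18)/37)*a + ((49)/37)) (((24)/37)*a^8 + ((-120)/37)*a^7 + ((299)/37)*a^6 + ((-511)/37)*a^5 + ((558)/37)*a^4 + ((-408)/37)*a^3 + ((193)/37)*a^2 + ((-18)/37)*a + ((49)/37)) (((653)/37)*a^8 + ((-3043)/37)*a^7 + ((7292)/37)*a^6 + ((-11278)/37)*a^5 + ((11029)/37)*a^4 + ((-6994)/37)*a^3 + ((2598)/37)*a^2 + ((-906)/37)*a + ((641)/37)) ((({ a₁ := 1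 - c, a₂ := -b, a₃ := -b, a₄ := 0, a₆ := 0 } : WeierstrassCurve K).toAffine).slope (((24)/37)*a^8 + ((-120)/37)*a^7 + ((299)/37)*a^6 + ((-511)/37)*a^5 + ((558)/37)*a^4 + ((-408)/37)*a^3 + ((193)/37)*a^2 + ((-18)/37)*a + ((49)/37)) (((24)/37)*a^8 + ((-120)/37)*a^7 + ((299)/37)*a^6 + ((-511)/37)*a^5 + ((558)/37)*a^4 + ((-408)/37)*a^3 + ((193)/37)*a^2 + ((-18)/37)*a + ((49)/37)) (((653)/37)*a^8 + ((-3043)/37)*a^7 + ((7292)/37)*a^6 + ((-11278)/37)*a^5 + ((11029)/37)*a^4 + ((-6994)/37)*a^3 + ((2598)/37)*a^2 + ((-906)/37)*a + ((641)/37)) (((653)/37)*a^8 + ((-3043)/37)*a^7 + ((7292)/37)*a^6 + ((-11278)/37)*a^5 + ((11029)/37)*a^4 + ((-6994)/37)*a^3 + ((2598)/37)*a^2 + ((-906)/37)*a + ((641)/37))) = (((-2)/37)*a^8 + ((-175)/37)*a^7 + ((601)/37)*a^6 + ((-1237)/37)*a^5 + ((1526)/37)*a^4 + ((-1113)/37)*a^3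 + ((505)/37)*a^2 + ((-91)/37)*a + ((147)/37)) := by
    rw [hL8]
    simp only [WeierstrassCurve.Affine.addY, WeierstrassCurve.Affine.negAddY, WeierstrassCurve.Affine.addX, WeierstrassCurve.Affine.negY]
    rw [hb, hc]
    linear_combination (((13225)/50653)*a^15 + ((-77004)/50653)*a^14 + ((175169)/50653)*a^13 + ((-145751)/50653)*a^12 + ((-245432)/50653)*a^11 + ((917830)/50653)*a^10 + ((-1231549)/50653)*a^9 + ((698393)/50653)*a^8 + ((383451)/50653)*a^7 + ((-1061463)/50653)*a^6 + ((1018089)/50653)*a^5 + ((-689681)/50653)*a^4 + ((519088)/50653)*a^3 + ((-563228)/50653)*a^2 + ((567758)/50653)*a + ((-1036701)/50653)) * hpoly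
  have e8 : WeierstrassCurve.Affine.Point.some _ _ h8 + WeierstrassCurve.Affine.Point.some _ _ h8 = WeierstrassCurve.Affine.Point.some _ _ h16 :=
    (WeierstrassCurve.Affine.Point.add_self_of_Y_ne hy8).trans (some_congr' _ h16 gx8 gy8)
  have hy16 : (((-2)/37)*a^8 + ((-175)/37)*a^7 + ((601)/37)*a^6 + ((-1237)/37)*a^5 + ((1526)/37)*a^4 + ((-1113)/37)*a^3 + ((505)/37)*a^2 + ((-91)/37)*a + ((147)/37)) ≠ (({ a₁ := 1 - c, a₂ := -b, a₃ := -b, a₄ := 0, a₆ := 0 } : WeierstrassCurve K).toAffine).negY (((-22)/37)*a^8 + ((36)/37)*a^7 + ((-12)/37)*a^6 + ((-102)/37)*a^5 + ((247)/37)*a^4 + ((-218)/37)*a^3 + ((153)/37)*a^2 + ((-2)/37)*a + ((63)/37)) (((-2)/37)*a^8 + ((-175)/37)*a^7 + ((601)/37)*a^6 + ((-1237)/37)*a^5 + ((1526)/37)*a^4 + ((-1113)/37)*a^3 + ((505)/37)*a^2 + ((-91)/37)*a + ((147)/37)) := by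
    simp only [WeierstrassCurve.Affine.negY]
    rw [hb, hc]
    intro h
    exact one_ne_zero (α := K) (by linear_combination (((-172)/37)*a^8 + ((342)/37)*a^7 + ((71)/37)*a^6 + ((-599)/37)*a^5 + ((589)/37)*a^4 + ((-36)/37)*a^3 + ((-82)/37)*a^2 + ((-93)/37)*a + ((-12)/37)) * h + (((-181632)/50653)*a^15 + ((601608)/50653)*a^14 + ((-295812)/50653)*a^13 + ((-1811058)/50653)*a^12 + ((4832974)/50653)*a^11 + ((-4246952)/50653)*a^10 + ((-2205746)/50653)*a^9 + ((8741783)/50653)*a^8 + ((-8457949)/50653)*a^7 + ((548883)/50653)*a^6 + ((4301488)/50653)*a^5 + ((-3137607)/50653)*a^4 + ((-80703)/50653)*a^3 + ((355879)/50653)*a^2 + ((748942)/50653)*a + ((142057)/50653)) * hpoly)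
  have hL16 : (({ a₁ := 1 - c, a₂ := -b, a₃ := -b, a₄ := 0, a₆ := 0 } : WeierstrassCurve K).toAffine).slope (((-22)/37)*a^8 + ((36)/37)*a^7 + ((-12)/37)*a^6 + ((-102)/37)*a^5 + ((247)/37)*a^4 + ((-218)/37)*a^3 + ((153)/37)*a^2 + ((-2)/37)*a + ((63)/37)) (((-22)/37)*a^8 + ((36)/37)*a^7 + ((-12)/37)*a^6 + ((-102)/37)*a^5 + ((247)/37)*a^4 + ((-218)/37)*a^3 + ((153)/37)*a^2 + ((-2)/37)*a + ((63)/37)) (((-2)/37)*a^8 + ((-175)/37)*a^7 + ((601)/37)*a^6 + ((-1237)/37)*a^5 + ((1526)/37)*a^4 + ((-1113)/37)*a^3 + ((505)/37)*a^2 + ((-91)/37)*a + ((147)/37)) (((-2)/37)*a^8 + ((-175)/37)*a^7 + ((601)/37)*a^6 + ((-1237)/37)*a^5 + ((1526)/37)*a^4 + ((-1113)/37)*a^3 + ((505)/37)*a^2 + ((-91)/37)*a + ((147)/37)) = (((-1)/37)*a^8 + ((5)/37)*a^7 + ((23)/37)*a^6 + ((-45)/37)*a^5 + ((60)/37)*a^4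 + ((-20)/37)*a^3 + ((-25)/37)*a^2 + ((-27)/37)*a + ((18)/37)) := by
    rw [WeierstrassCurve.Affine.slope_of_Y_ne rfl hy16, div_eq_iff (sub_ne_zero_of_ne hy16)]
    simp only [WeierstrassCurve.Affine.negY]
    rw [hb, hc]
    linear_combination (((-1056)/50653)*a^15 + ((6678)/50653)*a^14 + ((17922)/50653)*a^13 + ((-87828)/50653)*a^12 + ((146950)/50653)*a^11 + ((-14773)/50653)*a^10 + ((-465085)/50653)*a^9 + ((853845)/50653)*a^8 + ((-968019)/50653)*a^7 + ((817681)/50653)*a^6 + ((-1265091)/50653)*a^5 + ((2079207)/50653)*a^4 + ((-2020080)/50653)*a^3 + ((1096679)/50653)*a^2 + ((128519)/50653)*a + ((66468)/50653)) * hpoly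
  have gx16 : (({ a₁ := 1 - c, a₂ := -b, a₃ := -b, a₄ := 0, a₆ := 0 } : WeierstrassCurve K).toAffine).addX (((-22)/37)*a^8 + ((36)/37)*a^7 + ((-12)/37)*a^6 + ((-102)/37)*a^5 + ((247)/37)*a^4 + ((-218)/37)*a^3 + ((153)/37)*a^2 + ((-2)/37)*a + ((63)/37)) (((-22)/37)*a^8 + ((36)/37)*a^7 + ((-12)/37)*a^6 + ((-102)/37)*a^5 + ((247)/37)*a^4 + ((-218)/37)*a^3 + ((153)/37)*a^2 + ((-2)/37)*a + ((63)/37)) ((({ a₁ := 1 - c, a₂ := -b, a₃ := -b, a₄ := 0, a₆ := 0 } : WeierstrassCurve K).toAffine).slope (((-22)/37)*a^8 + ((36)/37)*a^7 + ((-12)/37)*a^6 + ((-102)/37)*a^5 + ((247)/37)*a^4 + ((-218)/37)*a^3 + ((153)/37)*a^2 + ((-2)/37)*a + ((63)/37)) (((-22)/37)*a^8 + ((36)/37)*a^7 + ((-12)/37)*a^6 + ((-102)/37)*a^5 + ((247)/37)*a^4 + ((-218)/37)*a^3 + ((153)/37)*a^2 + ((-2)/37)*a + ((63)/37)) (((-2)/37)*a^8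 + ((-175)/37)*a^7 + ((601)/37)*a^6 + ((-1237)/37)*a^5 + ((1526)/37)*a^4 + ((-1113)/37)*a^3 + ((505)/37)*a^2 + ((-91)/37)*a + ((147)/37)) (((-2)/37)*a^8 + ((-175)/37)*a^7 + ((601)/37)*a^6 + ((-1237)/37)*a^5 + ((1526)/37)*a^4 + ((-1113)/37)*a^3 + ((505)/37)*a^2 + ((-91)/37)*a + ((147)/37))) = (0 : K) := by
    rw [hL16]
    simp only [WeierstrassCurve.Affine.addX]
    rw [hb, hc]
    linear_combination (((-47)/1369)*a^7 + ((218)/1369)*a^6 + ((1163)/1369)*a^5 + ((-1703)/1369)*a^4 + ((2082)/1369)*a^3 + ((-146)/1369)*a^2 + ((-772)/1369)*a + ((-2130)/1369)) * hpoly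
  have gy16 : (({ a₁ := 1 - c, a₂ := -b, a₃ := -b, a₄ := 0, a₆ := 0 } : WeierstrassCurve K).toAffine).addY (((-22)/37)*a^8 + ((36)/37)*a^7 + ((-12)/37)*a^6 + ((-102)/37)*a^5 + ((247)/37)*a^4 + ((-218)/37)*a^3 + ((153)/37)*a^2 + ((-2)/37)*a + ((63)/37)) (((-22)/37)*a^8 + ((36)/37)*a^7 + ((-12)/37)*a^6 + ((-102)/37)*a^5 + ((247)/37)*a^4 + ((-218)/37)*a^3 + ((153)/37)*a^2 + ((-2)/37)*a + ((63)/37)) (((-2)/37)*a^8 + ((-175)/37)*a^7 + ((601)/37)*a^6 + ((-1237)/37)*a^5 + ((1526)/37)*a^4 + ((-1113)/37)*a^3 + ((505)/37)*a^2 + ((-91)/37)*a + ((147)/37)) ((({ a₁ := 1 - c, a₂ := -b, a₃ := -b, a₄ := 0, a₆ := 0 } : WeierstrassCurve K).toAffine).slope (((-22)/37)*a^8 + ((36)/37)*a^7 + ((-12)/37)*a^6 + ((-102)/37)*a^5 + ((247)/37)*a^4 + ((-218)/37)*a^3 + ((153)/37)*a^2 + ((-2)/37)*a + ((63)/37)) (((-22)/37)*a^8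 + ((36)/37)*a^7 + ((-12)/37)*a^6 + ((-102)/37)*a^5 + ((247)/37)*a^4 + ((-218)/37)*a^3 + ((153)/37)*a^2 + ((-2)/37)*a + ((63)/37)) (((-2)/37)*a^8 + ((-175)/37)*a^7 + ((601)/37)*a^6 + ((-1237)/37)*a^5 + ((1526)/37)*a^4 + ((-1113)/37)*a^3 + ((505)/37)*a^2 + ((-91)/37)*a + ((147)/37)) (((-2)/37)*a^8 + ((-175)/37)*a^7 + ((601)/37)*a^6 + ((-1237)/37)*a^5 + ((1526)/37)*a^4 + ((-1113)/37)*a^3 + ((505)/37)*a^2 + ((-91)/37)*a + ((147)/37))) = (0 : K) := by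
    rw [hL16]
    simp only [WeierstrassCurve.Affine.addY, WeierstrassCurve.Affine.negAddY, WeierstrassCurve.Affine.addX, WeierstrassCurve.Affine.negY]
    rw [hb, hc]
    linear_combination (((2209)/50653)*a^15 + ((-16074)/50653)*a^14 + ((-21049)/50653)*a^13 + ((194015)/50653)*a^12 + ((-487442)/50653)*a^11 + ((579100)/50653)*a^10 + ((5488)/50653)*a^9 + ((-869036)/50653)*a^8 + ((1302747)/50653)*a^7 + ((-770282)/50653)*a^6 + ((158961)/50653)*a^5 + ((-334329)/50653)*a^4 + ((558655)/50653)*a^3 + ((-499532)/50653)*a^2 + ((6940)/50653)*a + ((-58281)/50653)) * hpoly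
  have e16 : WeierstrassCurve.Affine.Point.some _ _ h16 + WeierstrassCurve.Affine.Point.some _ _ h16 = WeierstrassCurve.Affine.Point.some _ _ h1 :=
    (WeierstrassCurve.Affine.Point.add_self_of_Y_ne hy16).trans (some_congr' _ h1 gx16 gy16)
  refine ⟨h1, ?_⟩
  have s2 : (2 : ℕ) • WeierstrassCurve.Affine.Point.some _ _ h1 = WeierstrassCurve.Affine.Point.some _ _ h2 := by
    rw [two_nsmul, e1]
  have s4 : (4 : ℕ) • WeierstrassCurve.Affine.Point.some _ _ h1 = WeierstrassCurve.Affine.Point.some _ _ h4 := by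
    show (2 + 2 : ℕ) • _ = _
    rw [add_nsmul, s2, e2]
  have s8 : (8 : ℕ) • WeierstrassCurve.Affine.Point.some _ _ h1 = WeierstrassCurve.Affine.Point.some _ _ h8 := by
    show (4 + 4 : ℕ) • _ = _
    rw [add_nsmul, s4, e4]
  have s16 : (16 : ℕ) • WeierstrassCurve.Affine.Point.some _ _ h1 = WeierstrassCurve.Affine.Point.some _ _ h16 := by
    show (8 + 8 : ℕ) • _ = _
    rw [add_nsmul, s8, e8]
  have s32 : (32 : ℕ) • WeierstrassCurve.Affine.Point.some _ _ h1 = WeierstrassCurve.Affine.Point.some _ _ h1 := by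
    show (16 + 16 : ℕ) • _ = _
    rw [add_nsmul, s16, e16]
  have h31 : (31 : ℕ) • WeierstrassCurve.Affine.Point.some _ _ h1 = 0 := by
    have h' := s32
    rw [show (32 : ℕ) = 31 + 1 from rfl, add_nsmul, one_nsmul] at h'
    exact add_right_cancel (h'.trans (zero_add _).symm)
  exact addOrderOf_eq_prime h31 (WeierstrassCurve.Affine.Point.some_ne_zero h1)
end

section
/- Let K = ℚ(a) where a¹⁰ + 2a⁸ − 3a⁷ + 3a⁶ − 7a⁵ + 8a⁴ − 7a³ + 7a² − 4a + 1 = 0. Set b = 62a⁹ − 48a⁸ + 47a⁷ − 192a⁶ + 262a⁵ − 321a⁴ + 421a³ − 330a² + 131a − 21 and c = 8a⁹ + 6a⁸ + 4a⁷ − 16a⁶ + 2a⁵ − 8a⁴ + 10a³ + 14a² − 16a + 5. Then the point (0,0) on the elliptic curve y² + (1−c)xy − by = x³ − bx² over K has order exactly 31. -/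
private lemma aux_dbl {F : Type} [Field F] [DecidableEq F] {W : WeierstrassCurve.Affine F} {x₁ y₁ x₃ y₃ : F}
    (h₁ : W.Nonsingular x₁ y₁) (hy : y₁ ≠ W.negY x₁ y₁)
    (ex : W.addX x₁ x₁ (W.slope x₁ x₁ y₁ y₁) = x₃)
    (ey : W.addY x₁ x₁ y₁ (W.slope x₁ x₁ y₁ y₁) = y₃) :
    ∃ h₃ : W.Nonsingular x₃ y₃, WeierstrassCurve.Affine.Point.some _ _ h₁ + WeierstrassCurve.Affine.Point.some _ _ h₁ = WeierstrassCurve.Affine.Point.some _ _ h₃ := by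
  subst ex ey
  exact ⟨_, WeierstrassCurve.Affine.Point.add_self_of_Y_ne hy⟩

private lemma aux_add {F : Type} [Field F] [DecidableEq F] {W : WeierstrassCurve.Affine F} {x₁ y₁ x₂ y₂ x₃ y₃ : F}
    (h₁ : W.Nonsingular x₁ y₁) (h₂ : W.Nonsingular x₂ y₂) (hx : x₁ ≠ x₂)
    (ex : W.addX x₁ x₂ (W.slope x₁ x₂ y₁ y₂) = x₃)
    (ey : W.addY x₁ x₂ y₁ (W.slope x₁ x₂ y₁ y₂) = y₃) :
    ∃ h₃ : W.Nonsingular x₃ y₃, WeierstrassCurve.Affine.Point.some _ _ h₁ + WeierstrassCurve.Affine.Point.some _ _ h₂ = WeierstrassCurve.Affine.Point.some _ _ h₃ := by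
  subst ex ey
  exact ⟨_, WeierstrassCurve.Affine.Point.add_of_X_ne hx⟩

set_option maxHeartbeats 8000000 in
open Classical in
/-- The Tate normal form curve E_{b,c} over K = ℚ(a), where a is a root of the stated
polynomial, has the point (0,0) of order exactly 31. -/
theorem stmt_13 (K : Type) [Field K] [CharZero K] (a b c : K)
    (hpoly : a^10 + 2*a^8 - 3*a^7 + 3*a^6 - 7*a^5 + 8*a^4 - 7*a^3 + 7*a^2 - 4*a + 1 = 0)
    (hgen : IntermediateField.adjoin ℚ {a} = ⊤)
    (hb : b = 62*a^9 - 48*a^8 + 47*a^7 - 192*a^6 + 262*a^5 - 321*a^4 + 421*a^3 - 330*a^2 + 131*a - 21)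
    (hc : c = 8*a^9 + 6*a^8 + 4*a^7 - 16*a^6 + 2*a^5 - 8*a^4 + 10*a^3 + 14*a^2 - 16*a + 5) :
    ∃ h : ({ a₁ := 1 - c, a₂ := -b, a₃ := -b, a₄ := 0, a₆ := 0 } :
        WeierstrassCurve K).toAffine.Nonsingular 0 0,
      addOrderOf (WeierstrassCurve.Affine.Point.some _ _ h) = 31 := by
  subst hb; subst hc
  set W : WeierstrassCurve K := { a₁ := 1 - (8*a^9 + 6*a^8 + 4*a^7 - 16*a^6 + 2*a^5 - 8*a^4 + 10*a^3 + 14*a^2 - 16*a + 5), a₂ := -(62*a^9 - 48*a^8 + 47*a^7 - 192*a^6 + 262*a^5 - 321*a^4 + 421*a^3 - 330*a^2 + 131*a - 21), a₃ := -(62*a^9 - 48*a^8 + 47*a^7 - 192*a^6 + 262*a^5 - 321*a^4 + 421*a^3 - 330*a^2 + 131*a - 21), a₄ := 0, a₆ := 0 } with hWdef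
  have ha1 : W.toAffine.a₁ = 1 - (8*a^9 + 6*a^8 + 4*a^7 - 16*a^6 + 2*a^5 - 8*a^4 + 10*a^3 + 14*a^2 - 16*a + 5) := by rw [hWdef]
  have ha2 : W.toAffine.a₂ = -(62*a^9 - 48*a^8 + 47*a^7 - 192*a^6 + 262*a^5 - 321*a^4 + 421*a^3 - 330*a^2 + 131*a - 21) := by rw [hWdef]
  have ha3 : W.toAffine.a₃ = -(62*a^9 - 48*a^8 + 47*a^7 - 192*a^6 + 262*a^5 - 321*a^4 + 421*a^3 - 330*a^2 + 131*a - 21) := by rw [hWdef]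
  have ha4 : W.toAffine.a₄ = 0 := by rw [hWdef]
  have ha6 : W.toAffine.a₆ = 0 := by rw [hWdef]
  have hbne : (62*a^9 - 48*a^8 + 47*a^7 - 192*a^6 + 262*a^5 - 321*a^4 + 421*a^3 - 330*a^2 + 131*a - 21 : K) ≠ 0 :=
    left_ne_zero_of_mul_eq_one (show (62*a^9 - 48*a^8 + 47*a^7 - 192*a^6 + 262*a^5 - 321*a^4 + 421*a^3 - 330*a^2 + 131*a - 21 : K) * ((-6)*a^9 + (-5)*a^8 + (-16)*a^7 + (5)*a^6 + (-11)*a^5 + (35)*a^4 + (-16)*a^3 + (23)*a^2 + (-21)*a + (-2)) = 1 by linear_combination ((-372)*a^8 + (-22)*a^7 + (-290)*a^6 + (923)*a^5 + (-656)*a^4 + (1367)*a^3 + (-1489)*a^2 + (343)*a + (41)) * hpoly)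
  have h1 : W.toAffine.Nonsingular 0 0 := by
    rw [WeierstrassCurve.Affine.nonsingular_iff', WeierstrassCurve.Affine.equation_iff', ha1, ha2, ha3, ha4, ha6]
    refine ⟨by ring, Or.inr fun hfalse => hbne ?_⟩
    linear_combination -hfalse
  have hy1 : (0 : K) ≠ W.toAffine.negY 0 0 := by
    simp only [WeierstrassCurve.Affine.negY, ha1, ha3]
    intro hfalse; exact hbne (by linear_combination -hfalse)
  have hs1 : W.toAffine.slope 0 0 0 0 = 0 := by
    rw [WeierstrassCurve.Affine.slope_of_Y_ne rfl hy1, div_eq_zero_iff]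
    left; rw [ha4]; ring
  have ex2 : W.toAffine.addX 0 0 (W.toAffine.slope 0 0 0 0) = ((62)*a^9 + (-48)*a^8 + (47)*a^7 + (-192)*a^6 + (262)*a^5 + (-321)*a^4 + (421)*a^3 + (-330)*a^2 + (131)*a + (-21)) := by
    rw [hs1]; simp only [WeierstrassCurve.Affine.addX, ha1, ha2]; linear_combination (0 : K) * hpoly
  have ey2 : W.toAffine.addY 0 0 0 (W.toAffine.slope 0 0 0 0) = ((-442)*a^9 + (-1520)*a^8 + (173)*a^7 + (190)*a^6 + (3298)*a^5 + (-3013)*a^4 + (4025)*a^3 + (-6798)*a^2 + (4459)*a + (-1137)) := by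
    rw [hs1]
    simp only [WeierstrassCurve.Affine.addY, WeierstrassCurve.Affine.negAddY, WeierstrassCurve.Affine.addX, WeierstrassCurve.Affine.negY, ha1, ha2, ha3]
    linear_combination ((496)*a^8 + (-12)*a^7 + (-656)*a^6 + (-926)*a^5 + (1812)*a^4 + (284)*a^3 + (-1826)*a^2 + (660)*a + (1032)) * hpoly
  obtain ⟨h2, e2⟩ := aux_dbl h1 hy1 ex2 ey2
  have hx2 : (((62)*a^9 + (-48)*a^8 + (47)*a^7 + (-192)*a^6 + (262)*a^5 + (-321)*a^4 + (421)*a^3 + (-330)*a^2 + (131)*a + (-21)) : K) ≠ 0 :=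
    left_ne_zero_of_mul_eq_one (show (((62)*a^9 + (-48)*a^8 + (47)*a^7 + (-192)*a^6 + (262)*a^5 + (-321)*a^4 + (421)*a^3 + (-330)*a^2 + (131)*a + (-21)) : K) * ((-6)*a^9 + (-5)*a^8 + (-16)*a^7 + (5)*a^6 + (-11)*a^5 + (35)*a^4 + (-16)*a^3 + (23)*a^2 + (-21)*a + (-2)) = 1 by linear_combination ((-372)*a^8 + (-22)*a^7 + (-290)*a^6 + (923)*a^5 + (-656)*a^4 + (1367)*a^3 + (-1489)*a^2 + (343)*a + (41)) * hpoly)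
  have hs2 : W.toAffine.slope ((62)*a^9 + (-48)*a^8 + (47)*a^7 + (-192)*a^6 + (262)*a^5 + (-321)*a^4 + (421)*a^3 + (-330)*a^2 + (131)*a + (-21)) 0 ((-442)*a^9 + (-1520)*a^8 + (173)*a^7 + (190)*a^6 + (3298)*a^5 + (-3013)*a^4 + (4025)*a^3 + (-6798)*a^2 + (4459)*a + (-1137)) 0 = ((8)*a^9 + (6)*a^8 + (4)*a^7 + (-16)*a^6 + (2)*a^5 + (-8)*a^4 + (10)*a^3 + (14)*a^2 + (-16)*a + (5)) := by
    rw [WeierstrassCurve.Affine.slope_of_X_ne hx2, sub_zero, sub_zero, div_eq_iff hx2]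
    linear_combination ((-496)*a^8 + (12)*a^7 + (656)*a^6 + (926)*a^5 + (-1812)*a^4 + (-284)*a^3 + (1826)*a^2 + (-660)*a + (-1032)) * hpoly
  have ex3 : W.toAffine.addX ((62)*a^9 + (-48)*a^8 + (47)*a^7 + (-192)*a^6 + (262)*a^5 + (-321)*a^4 + (421)*a^3 + (-330)*a^2 + (131)*a + (-21)) 0 (W.toAffine.slope ((62)*a^9 + (-48)*a^8 + (47)*a^7 + (-192)*a^6 + (262)*a^5 + (-321)*a^4 + (421)*a^3 + (-330)*a^2 + (131)*a + (-21)) 0 ((-442)*a^9 + (-1520)*a^8 + (173)*a^7 + (190)*a^6 + (3298)*a^5 + (-3013)*a^4 + (4025)*a^3 + (-6798)*a^2 + (4459)*a + (-1137)) 0) = ((8)*a^9 + (6)*a^8 + (4)*a^7 + (-16)*a^6 + (2)*a^5 + (-8)*a^4 + (10)*a^3 + (14)*a^2 + (-16)*a + (5)) := by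
    rw [hs2]; simp only [WeierstrassCurve.Affine.addX, ha1, ha2]
    linear_combination (0 : K) * hpoly
  have ey3 : W.toAffine.addY ((62)*a^9 + (-48)*a^8 + (47)*a^7 + (-192)*a^6 + (262)*a^5 + (-321)*a^4 + (421)*a^3 + (-330)*a^2 + (131)*a + (-21)) 0 ((-442)*a^9 + (-1520)*a^8 + (173)*a^7 + (190)*a^6 + (3298)*a^5 + (-3013)*a^4 + (4025)*a^3 + (-6798)*a^2 + (4459)*a + (-1137)) (W.toAffine.slope ((62)*a^9 + (-48)*a^8 + (47)*a^7 + (-192)*a^6 + (262)*a^5 + (-321)*a^4 + (421)*a^3 + (-330)*a^2 + (131)*a + (-21)) 0 ((-442)*a^9 + (-1520)*a^8 + (173)*a^7 + (190)*a^6 + (3298)*a^5 + (-3013)*a^4 + (4025)*a^3 + (-6798)*a^2 + (4459)*a + (-1137)) 0) = ((54)*a^9 + (-54)*a^8 + (43)*a^7 + (-176)*a^6 + (260)*a^5 + (-313)*a^4 + (411)*a^3 + (-344)*a^2 + (147)*a + (-26)) := by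
    rw [hs2]
    simp only [WeierstrassCurve.Affine.addY, WeierstrassCurve.Affine.negAddY, WeierstrassCurve.Affine.addX, WeierstrassCurve.Affine.negY, ha1, ha2, ha3]
    linear_combination ((496)*a^8 + (-12)*a^7 + (-656)*a^6 + (-926)*a^5 + (1812)*a^4 + (284)*a^3 + (-1826)*a^2 + (660)*a + (1032)) * hpoly
  obtain ⟨h3, e3⟩ := aux_add h2 h1 hx2 ex3 ey3
  have hx3 : (((8)*a^9 + (6)*a^8 + (4)*a^7 + (-16)*a^6 + (2)*a^5 + (-8)*a^4 + (10)*a^3 + (14)*a^2 + (-16)*a + (5)) : K) ≠ 0 :=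
    left_ne_zero_of_mul_eq_one (show (((8)*a^9 + (6)*a^8 + (4)*a^7 + (-16)*a^6 + (2)*a^5 + (-8)*a^4 + (10)*a^3 + (14)*a^2 + (-16)*a + (5)) : K) * ((-4)*a^9 + (-6)*a^8 + (-12)*a^7 + (-2)*a^5 + (20)*a^4 + (-2)*a^3 + (6)*a^2 + (-12)*a + (-3)) = 1 by linear_combination ((-32)*a^8 + (-72)*a^7 + (-84)*a^6 + (16)*a^5 + (72)*a^4 + (68)*a^3 + (-12)*a^2 + (-76)*a + (-16)) * hpoly)
  have hs3 : W.toAffine.slope ((8)*a^9 + (6)*a^8 + (4)*a^7 + (-16)*a^6 + (2)*a^5 + (-8)*a^4 + (10)*a^3 + (14)*a^2 + (-16)*a + (5)) 0 ((54)*a^9 + (-54)*a^8 + (43)*a^7 + (-176)*a^6 + (260)*a^5 + (-313)*a^4 + (411)*a^3 + (-344)*a^2 + (147)*a + (-26)) 0 = ((2)*a^9 + (4)*a^8 + (1)*a^7 + (-2)*a^6 + (-6)*a^5 + (3)*a^4 + (-7)*a^3 + (14)*a^2 + (-9)*a + (2)) := by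
    rw [WeierstrassCurve.Affine.slope_of_X_ne hx3, sub_zero, sub_zero, div_eq_iff hx3]
    linear_combination ((-16)*a^8 + (-44)*a^7 + (-8)*a^6 + (66)*a^5 + (48)*a^4 + (-92)*a^3 + (-14)*a^2 + (80)*a + (-36)) * hpoly
  have ex4 : W.toAffine.addX ((8)*a^9 + (6)*a^8 + (4)*a^7 + (-16)*a^6 + (2)*a^5 + (-8)*a^4 + (10)*a^3 + (14)*a^2 + (-16)*a + (5)) 0 (W.toAffine.slope ((8)*a^9 + (6)*a^8 + (4)*a^7 + (-16)*a^6 + (2)*a^5 + (-8)*a^4 + (10)*a^3 + (14)*a^2 + (-16)*a + (5)) 0 ((54)*a^9 + (-54)*a^8 + (43)*a^7 + (-176)*a^6 + (260)*a^5 + (-313)*a^4 + (411)*a^3 + (-344)*a^2 + (147)*a + (-26)) 0) = ((25)*a^9 + (-14)*a^8 + (18)*a^7 + (-74)*a^6 + (91)*a^5 + (-115)*a^4 + (151)*a^3 + (-108)*a^2 + (38)*a + (-5)) := by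
    rw [hs3]; simp only [WeierstrassCurve.Affine.addX, ha1, ha2]
    linear_combination ((-12)*a^8 + (-28)*a^7 + (4)*a^6 + (46)*a^5 + (21)*a^4 + (-76)*a^3 + (12)*a^2 + (41)*a + (-25)) * hpoly
  have ey4 : W.toAffine.addY ((8)*a^9 + (6)*a^8 + (4)*a^7 + (-16)*a^6 + (2)*a^5 + (-8)*a^4 + (10)*a^3 + (14)*a^2 + (-16)*a + (5)) 0 ((54)*a^9 + (-54)*a^8 + (43)*a^7 + (-176)*a^6 + (260)*a^5 + (-313)*a^4 + (411)*a^3 + (-344)*a^2 + (147)*a + (-26)) (W.toAffine.slope ((8)*a^9 + (6)*a^8 + (4)*a^7 + (-16)*a^6 + (2)*a^5 + (-8)*a^4 + (10)*a^3 + (14)*a^2 + (-16)*a + (5)) 0 ((54)*a^9 + (-54)*a^8 + (43)*a^7 + (-176)*a^6 + (260)*a^5 + (-313)*a^4 + (411)*a^3 + (-344)*a^2 + (147)*a + (-26)) 0) = ((-43)*a^9 + (-394)*a^8 + (85)*a^7 + (-137)*a^6 + (1004)*a^5 + (-996)*a^4 + (1322)*a^3 + (-1873)*a^2 + (1148)*a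 + (-281)) := by
    rw [hs3]
    simp only [WeierstrassCurve.Affine.addY, WeierstrassCurve.Affine.negAddY, WeierstrassCurve.Affine.addX, WeierstrassCurve.Affine.negY, ha1, ha2, ha3]
    linear_combination ((-72)*a^17 + (-192)*a^16 + (-68)*a^15 + (368)*a^14 + (526)*a^13 + (-424)*a^12 + (-525)*a^11 + (-404)*a^10 + (846)*a^9 + (186)*a^8 + (566)*a^7 + (-1197)*a^6 + (-850)*a^5 + (2084)*a^4 + (-657)*a^3 + (-562)*a^2 + (271)*a + (236)) * hpoly
  obtain ⟨h4, e4⟩ := aux_add h3 h1 hx3 ex4 ey4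
  have hx4 : (((25)*a^9 + (-14)*a^8 + (18)*a^7 + (-74)*a^6 + (91)*a^5 + (-115)*a^4 + (151)*a^3 + (-108)*a^2 + (38)*a + (-5)) : K) ≠ 0 :=
    left_ne_zero_of_mul_eq_one (show (((25)*a^9 + (-14)*a^8 + (18)*a^7 + (-74)*a^6 + (91)*a^5 + (-115)*a^4 + (151)*a^3 + (-108)*a^2 + (38)*a + (-5)) : K) * ((-8)*a^9 + (-7)*a^8 + (-20)*a^7 + (8)*a^6 + (-13)*a^5 + (42)*a^4 + (-25)*a^3 + (25)*a^2 + (-28)*a + (3)) = 1 by linear_combination ((-200)*a^8 + (-63)*a^7 + (-146)*a^6 + (472)*a^5 + (-304)*a^4 + (546)*a^3 + (-641)*a^2 + (190)*a + (-16)) * hpoly)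
  have hs4 : W.toAffine.slope ((25)*a^9 + (-14)*a^8 + (18)*a^7 + (-74)*a^6 + (91)*a^5 + (-115)*a^4 + (151)*a^3 + (-108)*a^2 + (38)*a + (-5)) 0 ((-43)*a^9 + (-394)*a^8 + (85)*a^7 + (-137)*a^6 + (1004)*a^5 + (-996)*a^4 + (1322)*a^3 + (-1873)*a^2 + (1148)*a + (-281)) 0 = ((6)*a^9 + (4)*a^8 + (3)*a^7 + (-13)*a^6 + (2)*a^5 + (-8)*a^4 + (10)*a^3 + (8)*a^2 + (-10)*a + (3)) := by
    rw [WeierstrassCurve.Affine.slope_of_X_ne hx4, sub_zero, sub_zero, div_eq_iff hx4]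
    linear_combination ((-150)*a^8 + (-16)*a^7 + (173)*a^6 + (321)*a^5 + (-480)*a^4 + (-115)*a^3 + (413)*a^2 + (-80)*a + (-266)) * hpoly
  have ex5 : W.toAffine.addX ((25)*a^9 + (-14)*a^8 + (18)*a^7 + (-74)*a^6 + (91)*a^5 + (-115)*a^4 + (151)*a^3 + (-108)*a^2 + (38)*a + (-5)) 0 (W.toAffine.slope ((25)*a^9 + (-14)*a^8 + (18)*a^7 + (-74)*a^6 + (91)*a^5 + (-115)*a^4 + (151)*a^3 + (-108)*a^2 + (38)*a + (-5)) 0 ((-43)*a^9 + (-394)*a^8 + (85)*a^7 + (-137)*a^6 + (1004)*a^5 + (-996)*a^4 + (1322)*a^3 + (-1873)*a^2 + (1148)*a + (-281)) 0) = ((15)*a^9 + (10)*a^8 + (5)*a^7 + (-33)*a^6 + (3)*a^5 + (-15)*a^4 + (20)*a^3 + (28)*a^2 + (-32)*a + (10)) := by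
    rw [hs4]; simp only [WeierstrassCurve.Affine.addX, ha1, ha2]
    linear_combination ((-12)*a^8 + (-20)*a^7 + (4)*a^6 + (38)*a^5 + (-1)*a^4 + (-54)*a^3 + (15)*a^2 + (37)*a + (-29)) * hpoly
  have ey5 : W.toAffine.addY ((25)*a^9 + (-14)*a^8 + (18)*a^7 + (-74)*a^6 + (91)*a^5 + (-115)*a^4 + (151)*a^3 + (-108)*a^2 + (38)*a + (-5)) 0 ((-43)*a^9 + (-394)*a^8 + (85)*a^7 + (-137)*a^6 + (1004)*a^5 + (-996)*a^4 + (1322)*a^3 + (-1873)*a^2 + (1148)*a + (-281)) (W.toAffine.slope ((25)*a^9 + (-14)*a^8 + (18)*a^7 + (-74)*a^6 + (91)*a^5 + (-115)*a^4 + (151)*a^3 + (-108)*a^2 + (38)*a + (-5)) 0 ((-43)*a^9 + (-394)*a^8 + (85)*a^7 + (-137)*a^6 + (1004)*a^5 + (-996)*a^4 + (1322)*a^3 + (-1873)*a^2 + (1148)*a + (-281)) 0) = ((116)*a^9 + (-180)*a^8 + (115)*a^7 + (-415)*a^6 + (743)*a^5 + (-862)*a^4 + (1131)*a^3 + (-1068)*a^2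 + (512)*a + (-103)) := by
    rw [hs4]
    simp only [WeierstrassCurve.Affine.addY, WeierstrassCurve.Affine.negAddY, WeierstrassCurve.Affine.addX, WeierstrassCurve.Affine.negY, ha1, ha2, ha3]
    linear_combination ((-24)*a^17 + (-64)*a^16 + (-44)*a^15 + (100)*a^14 + (138)*a^13 + (-84)*a^12 + (-193)*a^11 + (-19)*a^10 + (145)*a^9 + (246)*a^8 + (110)*a^7 + (-331)*a^6 + (-702)*a^5 + (898)*a^4 + (338)*a^3 + (-840)*a^2 + (186)*a + (329)) * hpoly
  obtain ⟨h5, e5⟩ := aux_add h4 h1 hx4 ex5 ey5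
  have hx5 : (((15)*a^9 + (10)*a^8 + (5)*a^7 + (-33)*a^6 + (3)*a^5 + (-15)*a^4 + (20)*a^3 + (28)*a^2 + (-32)*a + (10)) : K) ≠ 0 :=
    left_ne_zero_of_mul_eq_one (show (((15)*a^9 + (10)*a^8 + (5)*a^7 + (-33)*a^6 + (3)*a^5 + (-15)*a^4 + (20)*a^3 + (28)*a^2 + (-32)*a + (10)) : K) * ((-6)*a^9 + (-2)*a^8 + (-13)*a^7 + (11)*a^6 + (-15)*a^5 + (36)*a^4 + (-30)*a^3 + (29)*a^2 + (-25)*a + (5)) = 1 by linear_combination ((-90)*a^8 + (-90)*a^7 + (-65)*a^6 + (133)*a^5 + (-2)*a^4 + (137)*a^3 + (31)*a^2 + (-214)*a + (49)) * hpoly)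
  have hs5 : W.toAffine.slope ((15)*a^9 + (10)*a^8 + (5)*a^7 + (-33)*a^6 + (3)*a^5 + (-15)*a^4 + (20)*a^3 + (28)*a^2 + (-32)*a + (10)) 0 ((116)*a^9 + (-180)*a^8 + (115)*a^7 + (-415)*a^6 + (743)*a^5 + (-862)*a^4 + (1131)*a^3 + (-1068)*a^2 + (512)*a + (-103)) 0 = ((4)*a^9 + (3)*a^8 + (2)*a^7 + (-8)*a^6 + (1)*a^5 + (-4)*a^4 + (5)*a^3 + (7)*a^2 + (-8)*a + (2)) := by
    rw [WeierstrassCurve.Affine.slope_of_X_ne hx5, sub_zero, sub_zero, div_eq_iff hx5]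
    linear_combination ((-60)*a^8 + (-85)*a^7 + (40)*a^6 + (207)*a^5 + (-13)*a^4 + (-252)*a^3 + (67)*a^2 + (164)*a + (-123)) * hpoly
  have ex6 : W.toAffine.addX ((15)*a^9 + (10)*a^8 + (5)*a^7 + (-33)*a^6 + (3)*a^5 + (-15)*a^4 + (20)*a^3 + (28)*a^2 + (-32)*a + (10)) 0 (W.toAffine.slope ((15)*a^9 + (10)*a^8 + (5)*a^7 + (-33)*a^6 + (3)*a^5 + (-15)*a^4 + (20)*a^3 + (28)*a^2 + (-32)*a + (10)) 0 ((116)*a^9 + (-180)*a^8 + (115)*a^7 + (-415)*a^6 + (743)*a^5 + (-862)*a^4 + (1131)*a^3 + (-1068)*a^2 + (512)*a + (-103)) 0) = ((16)*a^9 + (-12)*a^8 + (12)*a^7 + (-49)*a^6 + (67)*a^5 + (-81)*a^4 + (107)*a^3 + (-83)*a^2 + (32)*a + (-5)) := by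
    rw [hs5]; simp only [WeierstrassCurve.Affine.addX, ha1, ha2]
    linear_combination ((-16)*a^8 + (-24)*a^7 + (7)*a^6 + (52)*a^5 + (-2)*a^4 + (-65)*a^3 + (15)*a^2 + (43)*a + (-30)) * hpoly
  have ey6 : W.toAffine.addY ((15)*a^9 + (10)*a^8 + (5)*a^7 + (-33)*a^6 + (3)*a^5 + (-15)*a^4 + (20)*a^3 + (28)*a^2 + (-32)*a + (10)) 0 ((116)*a^9 + (-180)*a^8 + (115)*a^7 + (-415)*a^6 + (743)*a^5 + (-862)*a^4 + (1131)*a^3 + (-1068)*a^2 + (512)*a + (-103)) (W.toAffine.slope ((15)*a^9 + (10)*a^8 + (5)*a^7 + (-33)*a^6 + (3)*a^5 + (-15)*a^4 + (20)*a^3 + (28)*a^2 + (-32)*a + (10)) 0 ((116)*a^9 + (-180)*a^8 + (115)*a^7 + (-415)*a^6 + (743)*a^5 + (-862)*a^4 + (1131)*a^3 + (-1068)*a^2 + (512)*a + (-103)) 0) = ((1)*a^9 + (-241)*a^8 + (67)*a^7 + (-155)*a^6 + (671)*a^5 + (-691)*a^4 + (914)*a^3 + (-1188)*a^2 + (700)*a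 + (-167)) := by
    rw [hs5]
    simp only [WeierstrassCurve.Affine.addY, WeierstrassCurve.Affine.negAddY, WeierstrassCurve.Affine.addX, WeierstrassCurve.Affine.negY, ha1, ha2, ha3]
    linear_combination ((-64)*a^17 + (-144)*a^16 + (-76)*a^15 + (309)*a^14 + (338)*a^13 + (-178)*a^12 + (-532)*a^11 + (-105)*a^10 + (344)*a^9 + (412)*a^8 + (206)*a^7 + (-642)*a^6 + (-789)*a^5 + (1202)*a^4 + (196)*a^3 + (-826)*a^2 + (241)*a + (199)) * hpoly
  obtain ⟨h6, e6⟩ := aux_add h5 h1 hx5 ex6 ey6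
  have hx6 : (((16)*a^9 + (-12)*a^8 + (12)*a^7 + (-49)*a^6 + (67)*a^5 + (-81)*a^4 + (107)*a^3 + (-83)*a^2 + (32)*a + (-5)) : K) ≠ 0 :=
    left_ne_zero_of_mul_eq_one (show (((16)*a^9 + (-12)*a^8 + (12)*a^7 + (-49)*a^6 + (67)*a^5 + (-81)*a^4 + (107)*a^3 + (-83)*a^2 + (32)*a + (-5)) : K) * ((1)*a^9 + (-1)*a^7 + (-6)*a^6 + (-2)*a^5 + (-3)*a^4 + (7)*a^3 + (2)*a^2 + (2)*a + (-5)) = 1 by linear_combination ((16)*a^8 + (-12)*a^7 + (-36)*a^6 + (-61)*a^5 + (83)*a^4 + (34)*a^3 + (5)*a^2 + (-74)*a + (24)) * hpoly)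
  have hs6 : W.toAffine.slope ((16)*a^9 + (-12)*a^8 + (12)*a^7 + (-49)*a^6 + (67)*a^5 + (-81)*a^4 + (107)*a^3 + (-83)*a^2 + (32)*a + (-5)) 0 ((1)*a^9 + (-241)*a^8 + (67)*a^7 + (-155)*a^6 + (671)*a^5 + (-691)*a^4 + (914)*a^3 + (-1188)*a^2 + (700)*a + (-167)) 0 = ((3)*a^9 + (4)*a^8 + (1)*a^7 + (-5)*a^6 + (-4)*a^5 + (2)*a^4 + (-3)*a^3 + (13)*a^2 + (-11)*a + (3)) := by
    rw [WeierstrassCurve.Affine.slope_of_X_ne hx6, sub_zero, sub_zero, div_eq_iff hx6]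
    linear_combination ((-48)*a^8 + (-28)*a^7 + (92)*a^6 + (103)*a^5 + (-137)*a^4 + (-178)*a^3 + (306)*a^2 + (-59)*a + (-152)) * hpoly
  have ex7 : W.toAffine.addX ((16)*a^9 + (-12)*a^8 + (12)*a^7 + (-49)*a^6 + (67)*a^5 + (-81)*a^4 + (107)*a^3 + (-83)*a^2 + (32)*a + (-5)) 0 (W.toAffine.slope ((16)*a^9 + (-12)*a^8 + (12)*a^7 + (-49)*a^6 + (67)*a^5 + (-81)*a^4 + (107)*a^3 + (-83)*a^2 + (32)*a + (-5)) 0 ((1)*a^9 + (-241)*a^8 + (67)*a^7 + (-155)*a^6 + (671)*a^5 + (-691)*a^4 + (914)*a^3 + (-1188)*a^2 + (700)*a + (-167)) 0) = ((11)*a^9 + (17)*a^8 + (1)*a^7 + (-18)*a^6 + (-24)*a^5 + (17)*a^4 + (-22)*a^3 + (67)*a^2 + (-51)*a + (14)) := by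
    rw [hs6]; simp only [WeierstrassCurve.Affine.addX, ha1, ha2]
    linear_combination ((-15)*a^8 + (-26)*a^7 + (8)*a^6 + (51)*a^5 + (4)*a^4 + (-75)*a^3 + (22)*a^2 + (44)*a + (-33)) * hpoly
  have ey7 : W.toAffine.addY ((16)*a^9 + (-12)*a^8 + (12)*a^7 + (-49)*a^6 + (67)*a^5 + (-81)*a^4 + (107)*a^3 + (-83)*a^2 + (32)*a + (-5)) 0 ((1)*a^9 + (-241)*a^8 + (67)*a^7 + (-155)*a^6 + (671)*a^5 + (-691)*a^4 + (914)*a^3 + (-1188)*a^2 + (700)*a + (-167)) (W.toAffine.slope ((16)*a^9 + (-12)*a^8 + (12)*a^7 + (-49)*a^6 + (67)*a^5 + (-81)*a^4 + (107)*a^3 + (-83)*a^2 + (32)*a + (-5)) 0 ((1)*a^9 + (-241)*a^8 + (67)*a^7 + (-155)*a^6 + (671)*a^5 + (-691)*a^4 + (914)*a^3 + (-1188)*a^2 + (700)*a + (-167)) 0) = ((192)*a^9 + (-259)*a^8 + (179)*a^7 + (-663)*a^6 + (1120)*a^5 + (-1315)*a^4 + (1725)*a^3 + (-1573)*a^2 +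 (732)*a + (-143)) := by
    rw [hs6]
    simp only [WeierstrassCurve.Affine.addY, WeierstrassCurve.Affine.negAddY, WeierstrassCurve.Affine.addX, WeierstrassCurve.Affine.negY, ha1, ha2, ha3]
    linear_combination ((-75)*a^17 + (-160)*a^16 + (-57)*a^15 + (358)*a^14 + (342)*a^13 + (-308)*a^12 + (-476)*a^11 + (-132)*a^10 + (481)*a^9 + (223)*a^8 + (471)*a^7 + (-941)*a^6 + (-706)*a^5 + (1398)*a^4 + (-64)*a^3 + (-622)*a^2 + (90)*a + (255)) * hpoly
  obtain ⟨h7, e7⟩ := aux_add h6 h1 hx6 ex7 ey7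
  have hx7 : (((11)*a^9 + (17)*a^8 + (1)*a^7 + (-18)*a^6 + (-24)*a^5 + (17)*a^4 + (-22)*a^3 + (67)*a^2 + (-51)*a + (14)) : K) ≠ 0 :=
    left_ne_zero_of_mul_eq_one (show (((11)*a^9 + (17)*a^8 + (1)*a^7 + (-18)*a^6 + (-24)*a^5 + (17)*a^4 + (-22)*a^3 + (67)*a^2 + (-51)*a + (14)) : K) * ((-1)*a^9 + (-4)*a^8 + (-6)*a^7 + (-7)*a^6 + (2)*a^4 + (12)*a^3 + (-3)*a^2 + (4)*a + (-9)) = 1 by linear_combination ((-11)*a^8 + (-61)*a^7 + (-113)*a^6 + (-76)*a^5 + (47)*a^4 + (121)*a^3 + (68)*a^2 + (7)*a + (-127)) * hpoly)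
  have hs7 : W.toAffine.slope ((11)*a^9 + (17)*a^8 + (1)*a^7 + (-18)*a^6 + (-24)*a^5 + (17)*a^4 + (-22)*a^3 + (67)*a^2 + (-51)*a + (14)) 0 ((192)*a^9 + (-259)*a^8 + (179)*a^7 + (-663)*a^6 + (1120)*a^5 + (-1315)*a^4 + (1725)*a^3 + (-1573)*a^2 + (732)*a + (-143)) 0 = ((6)*a^9 + (3)*a^8 + (3)*a^7 + (-13)*a^6 + (5)*a^5 + (-10)*a^4 + (12)*a^3 + (5)*a^2 + (-9)*a + (3)) := by
    rw [WeierstrassCurve.Affine.slope_of_X_ne hx7, sub_zero, sub_zero, div_eq_iff hx7]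
    linear_combination ((-66)*a^8 + (-135)*a^7 + (42)*a^6 + (269)*a^5 + (70)*a^4 + (-407)*a^3 + (76)*a^2 + (271)*a + (-185)) * hpoly
  have ex8 : W.toAffine.addX ((11)*a^9 + (17)*a^8 + (1)*a^7 + (-18)*a^6 + (-24)*a^5 + (17)*a^4 + (-22)*a^3 + (67)*a^2 + (-51)*a + (14)) 0 (W.toAffine.slope ((11)*a^9 + (17)*a^8 + (1)*a^7 + (-18)*a^6 + (-24)*a^5 + (17)*a^4 + (-22)*a^3 + (67)*a^2 + (-51)*a + (14)) 0 ((192)*a^9 + (-259)*a^8 + (179)*a^7 + (-663)*a^6 + (1120)*a^5 + (-1315)*a^4 + (1725)*a^3 + (-1573)*a^2 + (732)*a + (-143)) 0) = ((10)*a^9 + (-25)*a^8 + (12)*a^7 + (-42)*a^6 + (90)*a^5 + (-100)*a^4 + (133)*a^3 + (-137)*a^2 + (70)*a + (-15)) := by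
    rw [hs7]; simp only [WeierstrassCurve.Affine.addX, ha1, ha2]
    linear_combination ((-12)*a^8 + (-24)*a^7 + (3)*a^6 + (44)*a^5 + (11)*a^4 + (-67)*a^3 + (6)*a^2 + (50)*a + (-23)) * hpoly
  have ey8 : W.toAffine.addY ((11)*a^9 + (17)*a^8 + (1)*a^7 + (-18)*a^6 + (-24)*a^5 + (17)*a^4 + (-22)*a^3 + (67)*a^2 + (-51)*a + (14)) 0 ((192)*a^9 + (-259)*a^8 + (179)*a^7 + (-663)*a^6 + (1120)*a^5 + (-1315)*a^4 + (1725)*a^3 + (-1573)*a^2 + (732)*a + (-143)) (W.toAffine.slope ((11)*a^9 + (17)*a^8 + (1)*a^7 + (-18)*a^6 + (-24)*a^5 + (17)*a^4 + (-22)*a^3 + (67)*a^2 + (-51)*a + (14)) 0 ((192)*a^9 + (-259)*a^8 + (179)*a^7 + (-663)*a^6 + (1120)*a^5 + (-1315)*a^4 + (1725)*a^3 + (-1573)*a^2 + (732)*a + (-143)) 0) = ((-19)*a^9 + (-218)*a^8 + (50)*a^7 + (-88)*a^6 + (566)*a^5 + (-566)*a^4 + (750)*a^3 + (-1045)*a^2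 + (636)*a + (-155)) := by
    rw [hs7]
    simp only [WeierstrassCurve.Affine.addY, WeierstrassCurve.Affine.negAddY, WeierstrassCurve.Affine.addX, WeierstrassCurve.Affine.negY, ha1, ha2, ha3]
    linear_combination ((-24)*a^17 + (-84)*a^16 + (-78)*a^15 + (109)*a^14 + (265)*a^13 + (-18)*a^12 + (-343)*a^11 + (-168)*a^10 + (228)*a^9 + (367)*a^8 + (119)*a^7 + (-264)*a^6 + (-751)*a^5 + (471)*a^4 + (844)*a^3 + (-923)*a^2 + (86)*a + (281)) * hpoly
  obtain ⟨h8, e8⟩ := aux_add h7 h1 hx7 ex8 ey8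
  have hx8 : (((10)*a^9 + (-25)*a^8 + (12)*a^7 + (-42)*a^6 + (90)*a^5 + (-100)*a^4 + (133)*a^3 + (-137)*a^2 + (70)*a + (-15)) : K) ≠ 0 :=
    left_ne_zero_of_mul_eq_one (show (((10)*a^9 + (-25)*a^8 + (12)*a^7 + (-42)*a^6 + (90)*a^5 + (-100)*a^4 + (133)*a^3 + (-137)*a^2 + (70)*a + (-15)) : K) * ((-5)*a^9 + (-6)*a^8 + (-12)*a^7 + (2)*a^6 + (-4)*a^5 + (20)*a^4 + (-4)*a^3 + (5)*a^2 + (-6)*a + (-5)) = 1 by linear_combination ((-50)*a^8 + (65)*a^7 + (70)*a^6 + (178)*a^5 + (-227)*a^4 + (97)*a^3 + (-184)*a^2 + (36)*a + (74)) * hpoly)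
  have hs8 : W.toAffine.slope ((10)*a^9 + (-25)*a^8 + (12)*a^7 + (-42)*a^6 + (90)*a^5 + (-100)*a^4 + (133)*a^3 + (-137)*a^2 + (70)*a + (-15)) 0 ((-19)*a^9 + (-218)*a^8 + (50)*a^7 + (-88)*a^6 + (566)*a^5 + (-566)*a^4 + (750)*a^3 + (-1045)*a^2 + (636)*a + (-155)) 0 = ((1)*a^9 + (5)*a^8 + (1)*a^6 + (-11)*a^5 + (10)*a^4 + (-14)*a^3 + (21)*a^2 + (-13)*a + (3)) := by
    rw [WeierstrassCurve.Affine.slope_of_X_ne hx8, sub_zero, sub_zero, div_eq_iff hx8]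
    linear_combination ((-10)*a^8 + (-25)*a^7 + (133)*a^6 + (-8)*a^5 + (-56)*a^4 + (-317)*a^3 + (525)*a^2 + (-209)*a + (-110)) * hpoly
  have ex9 : W.toAffine.addX ((10)*a^9 + (-25)*a^8 + (12)*a^7 + (-42)*a^6 + (90)*a^5 + (-100)*a^4 + (133)*a^3 + (-137)*a^2 + (70)*a + (-15)) 0 (W.toAffine.slope ((10)*a^9 + (-25)*a^8 + (12)*a^7 + (-42)*a^6 + (90)*a^5 + (-100)*a^4 + (133)*a^3 + (-137)*a^2 + (70)*a + (-15)) 0 ((-19)*a^9 + (-218)*a^8 + (50)*a^7 + (-88)*a^6 + (566)*a^5 + (-566)*a^4 + (750)*a^3 + (-1045)*a^2 + (636)*a + (-155)) 0) = ((-7)*a^9 + (15)*a^8 + (-8)*a^7 + (28)*a^6 + (-56)*a^5 + (64)*a^4 + (-84)*a^3 + (85)*a^2 + (-43)*a + (9)) := by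
    rw [hs8]; simp only [WeierstrassCurve.Affine.addX, ha1, ha2]
    linear_combination ((-7)*a^8 + (-36)*a^7 + (5)*a^6 + (41)*a^5 + (51)*a^4 + (-118)*a^3 + (25)*a^2 + (54)*a + (-18)) * hpoly
  have ey9 : W.toAffine.addY ((10)*a^9 + (-25)*a^8 + (12)*a^7 + (-42)*a^6 + (90)*a^5 + (-100)*a^4 + (133)*a^3 + (-137)*a^2 + (70)*a + (-15)) 0 ((-19)*a^9 + (-218)*a^8 + (50)*a^7 + (-88)*a^6 + (566)*a^5 + (-566)*a^4 + (750)*a^3 + (-1045)*a^2 + (636)*a + (-155)) (W.toAffine.slope ((10)*a^9 + (-25)*a^8 + (12)*a^7 + (-42)*a^6 + (90)*a^5 + (-100)*a^4 + (133)*a^3 + (-137)*a^2 + (70)*a + (-15)) 0 ((-19)*a^9 + (-218)*a^8 + (50)*a^7 + (-88)*a^6 + (566)*a^5 + (-566)*a^4 + (750)*a^3 + (-1045)*a^2 + (636)*a + (-155)) 0) = ((264)*a^9 + (-22)*a^8 + (153)*a^7 + (-701)*a^6 + (612)*a^5 + (-853)*a^4 + (1108)*a^3 + (-517)*a^2 +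 (36)*a + (35)) := by
    rw [hs8]
    simp only [WeierstrassCurve.Affine.addY, WeierstrassCurve.Affine.negAddY, WeierstrassCurve.Affine.addX, WeierstrassCurve.Affine.negY, ha1, ha2, ha3]
    linear_combination ((-49)*a^17 + (-259)*a^16 + (-29)*a^15 + (267)*a^14 + (939)*a^13 + (-1038)*a^12 + (109)*a^11 + (-1308)*a^10 + (2352)*a^9 + (-1668)*a^8 + (2468)*a^7 + (-2853)*a^6 + (140)*a^5 + (1547)*a^4 + (-323)*a^3 + (-521)*a^2 + (154)*a + (45)) * hpoly
  obtain ⟨h9, e9⟩ := aux_add h8 h1 hx8 ex9 ey9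
  have hx9 : (((-7)*a^9 + (15)*a^8 + (-8)*a^7 + (28)*a^6 + (-56)*a^5 + (64)*a^4 + (-84)*a^3 + (85)*a^2 + (-43)*a + (9)) : K) ≠ 0 :=
    left_ne_zero_of_mul_eq_one (show (((-7)*a^9 + (15)*a^8 + (-8)*a^7 + (28)*a^6 + (-56)*a^5 + (64)*a^4 + (-84)*a^3 + (85)*a^2 + (-43)*a + (9)) : K) * ((-5)*a^9 + (-4)*a^8 + (-13)*a^7 + (4)*a^6 + (-10)*a^5 + (27)*a^4 + (-15)*a^3 + (18)*a^2 + (-17)*a + (-1)) = 1 by linear_combination ((35)*a^8 + (-47)*a^7 + (1)*a^6 + (-132)*a^5 + (154)*a^4 + (-178)*a^3 + (278)*a^2 + (-150)*a + (-10)) * hpoly)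
  have hs9 : W.toAffine.slope ((-7)*a^9 + (15)*a^8 + (-8)*a^7 + (28)*a^6 + (-56)*a^5 + (64)*a^4 + (-84)*a^3 + (85)*a^2 + (-43)*a + (9)) 0 ((264)*a^9 + (-22)*a^8 + (153)*a^7 + (-701)*a^6 + (612)*a^5 + (-853)*a^4 + (1108)*a^3 + (-517)*a^2 + (36)*a + (35)) 0 = ((10)*a^9 + (-1)*a^8 + (7)*a^7 + (-26)*a^6 + (25)*a^5 + (-35)*a^4 + (44)*a^3 + (-24)*a^2 + (5)*a) := by
    rw [WeierstrassCurve.Affine.slope_of_X_ne hx9, sub_zero, sub_zero, div_eq_iff hx9]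
    linear_combination ((70)*a^8 + (-157)*a^7 + (4)*a^6 + (-51)*a^5 + (520)*a^4 + (-645)*a^3 + (193)*a^2 + (131)*a + (35)) * hpoly
  have ex10 : W.toAffine.addX ((-7)*a^9 + (15)*a^8 + (-8)*a^7 + (28)*a^6 + (-56)*a^5 + (64)*a^4 + (-84)*a^3 + (85)*a^2 + (-43)*a + (9)) 0 (W.toAffine.slope ((-7)*a^9 + (15)*a^8 + (-8)*a^7 + (28)*a^6 + (-56)*a^5 + (64)*a^4 + (-84)*a^3 + (85)*a^2 + (-43)*a + (9)) 0 ((264)*a^9 + (-22)*a^8 + (153)*a^7 + (-701)*a^6 + (612)*a^5 + (-853)*a^4 + (1108)*a^3 + (-517)*a^2 + (36)*a + (35)) 0) = ((-45)*a^9 + (-27)*a^8 + (-18)*a^7 + (100)*a^6 + (-19)*a^5 + (59)*a^4 + (-73)*a^3 + (-62)*a^2 + (82)*a + (-27)) := by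
    rw [hs9]; simp only [WeierstrassCurve.Affine.addX, ha1, ha2]
    linear_combination ((20)*a^8 + (-72)*a^7 + (11)*a^6 + (195)*a^4 + (-297)*a^3 + (109)*a^2 + (60)*a + (-3)) * hpoly
  have ey10 : W.toAffine.addY ((-7)*a^9 + (15)*a^8 + (-8)*a^7 + (28)*a^6 + (-56)*a^5 + (64)*a^4 + (-84)*a^3 + (85)*a^2 + (-43)*a + (9)) 0 ((264)*a^9 + (-22)*a^8 + (153)*a^7 + (-701)*a^6 + (612)*a^5 + (-853)*a^4 + (1108)*a^3 + (-517)*a^2 + (36)*a + (35)) (W.toAffine.slope ((-7)*a^9 + (15)*a^8 + (-8)*a^7 + (28)*a^6 + (-56)*a^5 + (64)*a^4 + (-84)*a^3 + (85)*a^2 + (-43)*a + (9)) 0 ((264)*a^9 + (-22)*a^8 + (153)*a^7 + (-701)*a^6 + (612)*a^5 + (-853)*a^4 + (1108)*a^3 + (-517)*a^2 + (36)*a + (35)) 0) = ((-507)*a^9 + (-258)*a^8 + (-210)*a^7 + (1157)*a^6 + (-341)*a^5 + (779)*a^4 + (-993)*a^3 + (-488)*a^2 + (805)*a + (-276)) :=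 by
    rw [hs9]
    simp only [WeierstrassCurve.Affine.addY, WeierstrassCurve.Affine.negAddY, WeierstrassCurve.Affine.addX, WeierstrassCurve.Affine.negY, ha1, ha2, ha3]
    linear_combination ((-40)*a^17 + (284)*a^16 + (-586)*a^15 + (493)*a^14 + (-1603)*a^13 + (4265)*a^12 + (-5759)*a^11 + (6989)*a^10 + (-10886)*a^9 + (15015)*a^8 + (-17170)*a^7 + (18883)*a^6 + (-17250)*a^5 + (9418)*a^4 + (-1150)*a^3 + (-1762)*a^2 + (981)*a + (100)) * hpoly
  obtain ⟨h10, e10⟩ := aux_add h9 h1 hx9 ex10 ey10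
  have hx10 : (((-45)*a^9 + (-27)*a^8 + (-18)*a^7 + (100)*a^6 + (-19)*a^5 + (59)*a^4 + (-73)*a^3 + (-62)*a^2 + (82)*a + (-27)) : K) ≠ 0 :=
    left_ne_zero_of_mul_eq_one (show (((-45)*a^9 + (-27)*a^8 + (-18)*a^7 + (100)*a^6 + (-19)*a^5 + (59)*a^4 + (-73)*a^3 + (-62)*a^2 + (82)*a + (-27)) : K) * ((-3)*a^9 + (-4)*a^8 + (-11)*a^7 + (-5)*a^5 + (21)*a^4 + (-7)*a^3 + (14)*a^2 + (-18)*a + (1)) = 1 by linear_combination ((135)*a^8 + (261)*a^7 + (387)*a^6 + (-48)*a^5 + (-316)*a^4 + (-592)*a^3 + (104)*a^2 + (456)*a + (-28)) * hpoly)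
  have hs10 : W.toAffine.slope ((-45)*a^9 + (-27)*a^8 + (-18)*a^7 + (100)*a^6 + (-19)*a^5 + (59)*a^4 + (-73)*a^3 + (-62)*a^2 + (82)*a + (-27)) 0 ((-507)*a^9 + (-258)*a^8 + (-210)*a^7 + (1157)*a^6 + (-341)*a^5 + (779)*a^4 + (-993)*a^3 + (-488)*a^2 + (805)*a + (-276)) 0 = ((-3)*a^9 + (6)*a^8 + (-3)*a^7 + (12)*a^6 + (-22)*a^5 + (26)*a^4 + (-34)*a^3 + (33)*a^2 + (-16)*a + (3)) := by
    rw [WeierstrassCurve.Affine.slope_of_X_ne hx10, sub_zero, sub_zero, div_eq_iff hx10]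
    linear_combination ((-135)*a^8 + (189)*a^7 + (243)*a^6 + (84)*a^5 + (-891)*a^4 + (432)*a^3 + (654)*a^2 + (-653)*a + (-195)) * hpoly
  have ex11 : W.toAffine.addX ((-45)*a^9 + (-27)*a^8 + (-18)*a^7 + (100)*a^6 + (-19)*a^5 + (59)*a^4 + (-73)*a^3 + (-62)*a^2 + (82)*a + (-27)) 0 (W.toAffine.slope ((-45)*a^9 + (-27)*a^8 + (-18)*a^7 + (100)*a^6 + (-19)*a^5 + (59)*a^4 + (-73)*a^3 + (-62)*a^2 + (82)*a + (-27)) 0 ((-507)*a^9 + (-258)*a^8 + (-210)*a^7 + (1157)*a^6 + (-341)*a^5 + (779)*a^4 + (-993)*a^3 + (-488)*a^2 + (805)*a + (-276)) 0) = ((-5)*a^9 + (-5)*a^8 + (-2)*a^7 + (10)*a^6 + (3)*a^5 + (2)*a^4 + (-2)*a^3 + (-14)*a^2 + (13)*a + (-4)) := by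
    rw [hs10]; simp only [WeierstrassCurve.Affine.addX, ha1, ha2]
    linear_combination ((33)*a^8 + (-66)*a^7 + (-12)*a^6 + (-27)*a^5 + (230)*a^4 + (-253)*a^3 + (41)*a^2 + (80)*a + (7)) * hpoly
  have ey11 : W.toAffine.addY ((-45)*a^9 + (-27)*a^8 + (-18)*a^7 + (100)*a^6 + (-19)*a^5 + (59)*a^4 + (-73)*a^3 + (-62)*a^2 + (82)*a + (-27)) 0 ((-507)*a^9 + (-258)*a^8 + (-210)*a^7 + (1157)*a^6 + (-341)*a^5 + (779)*a^4 + (-993)*a^3 + (-488)*a^2 + (805)*a + (-276)) (W.toAffine.slope ((-45)*a^9 + (-27)*a^8 + (-18)*a^7 + (100)*a^6 + (-19)*a^5 + (59)*a^4 + (-73)*a^3 + (-62)*a^2 + (82)*a + (-27)) 0 ((-507)*a^9 + (-258)*a^8 + (-210)*a^7 + (1157)*a^6 + (-341)*a^5 + (779)*a^4 + (-993)*a^3 + (-488)*a^2 + (805)*a + (-276)) 0) = ((-16)*a^9 + (116)*a^8 + (-41)*a^7 + (115)*a^6 + (-355)*a^5 + (379)*a^4 + (-501)*a^3 + (595)*a^2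 + (-334)*a + (77)) := by
    rw [hs10]
    simp only [WeierstrassCurve.Affine.addY, WeierstrassCurve.Affine.negAddY, WeierstrassCurve.Affine.addX, WeierstrassCurve.Affine.negY, ha1, ha2, ha3]
    linear_combination ((363)*a^17 + (-726)*a^16 + (99)*a^15 + (-1683)*a^14 + (5086)*a^13 + (-5342)*a^12 + (6225)*a^11 + (-11102)*a^10 + (14612)*a^9 + (-15327)*a^8 + (17718)*a^7 + (-15374)*a^6 + (4108)*a^5 + (3557)*a^4 + (-2080)*a^3 + (-615)*a^2 + (803)*a + (100)) * hpoly
  obtain ⟨h11, e11⟩ := aux_add h10 h1 hx10 ex11 ey11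
  have hx11 : (((-5)*a^9 + (-5)*a^8 + (-2)*a^7 + (10)*a^6 + (3)*a^5 + (2)*a^4 + (-2)*a^3 + (-14)*a^2 + (13)*a + (-4)) : K) ≠ 0 :=
    left_ne_zero_of_mul_eq_one (show (((-5)*a^9 + (-5)*a^8 + (-2)*a^7 + (10)*a^6 + (3)*a^5 + (2)*a^4 + (-2)*a^3 + (-14)*a^2 + (13)*a + (-4)) : K) * ((-4)*a^9 + (-4)*a^8 + (-11)*a^7 + (2)*a^6 + (-7)*a^5 + (21)*a^4 + (-9)*a^3 + (13)*a^2 + (-12)*a + (-1)) = 1 by linear_combination ((20)*a^8 + (40)*a^7 + (43)*a^6 + (-7)*a^5 + (-31)*a^4 + (-41)*a^3 + (-27)*a^2 + (47)*a + (3)) * hpoly)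
  have hs11 : W.toAffine.slope ((-5)*a^9 + (-5)*a^8 + (-2)*a^7 + (10)*a^6 + (3)*a^5 + (2)*a^4 + (-2)*a^3 + (-14)*a^2 + (13)*a + (-4)) 0 ((-16)*a^9 + (116)*a^8 + (-41)*a^7 + (115)*a^6 + (-355)*a^5 + (379)*a^4 + (-501)*a^3 + (595)*a^2 + (-334)*a + (77)) 0 = ((7)*a^9 + (-3)*a^8 + (5)*a^7 + (-20)*a^6 + (23)*a^5 + (-30)*a^4 + (39)*a^3 + (-26)*a^2 + (8)*a + (-1)) := by
    rw [WeierstrassCurve.Affine.slope_of_X_ne hx11, sub_zero, sub_zero, div_eq_iff hx11]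
    linear_combination ((35)*a^8 + (20)*a^7 + (-46)*a^6 + (-86)*a^5 + (81)*a^4 + (89)*a^3 + (-126)*a^2 + (3)*a + (73)) * hpoly
  have ex12 : W.toAffine.addX ((-5)*a^9 + (-5)*a^8 + (-2)*a^7 + (10)*a^6 + (3)*a^5 + (2)*a^4 + (-2)*a^3 + (-14)*a^2 + (13)*a + (-4)) 0 (W.toAffine.slope ((-5)*a^9 + (-5)*a^8 + (-2)*a^7 + (10)*a^6 + (3)*a^5 + (2)*a^4 + (-2)*a^3 + (-14)*a^2 + (13)*a + (-4)) 0 ((-16)*a^9 + (116)*a^8 + (-41)*a^7 + (115)*a^6 + (-355)*a^5 + (379)*a^4 + (-501)*a^3 + (595)*a^2 + (-334)*a + (77)) 0) = ((14)*a^9 + (73)*a^8 + (-12)*a^7 + (10)*a^6 + (-173)*a^5 + (166)*a^4 + (-221)*a^3 + (337)*a^2 + (-213)*a + (53)) := by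
    rw [hs11]; simp only [WeierstrassCurve.Affine.addX, ha1, ha2]
    linear_combination ((-7)*a^8 + (-60)*a^7 + (43)*a^6 + (43)*a^5 + (76)*a^4 + (-260)*a^3 + (192)*a^2 + (7)*a + (-65)) * hpoly
  have ey12 : W.toAffine.addY ((-5)*a^9 + (-5)*a^8 + (-2)*a^7 + (10)*a^6 + (3)*a^5 + (2)*a^4 + (-2)*a^3 + (-14)*a^2 + (13)*a + (-4)) 0 ((-16)*a^9 + (116)*a^8 + (-41)*a^7 + (115)*a^6 + (-355)*a^5 + (379)*a^4 + (-501)*a^3 + (595)*a^2 + (-334)*a + (77)) (W.toAffine.slope ((-5)*a^9 + (-5)*a^8 + (-2)*a^7 + (10)*a^6 + (3)*a^5 + (2)*a^4 + (-2)*a^3 + (-14)*a^2 + (13)*a + (-4)) 0 ((-16)*a^9 + (116)*a^8 + (-41)*a^7 + (115)*a^6 + (-355)*a^5 + (379)*a^4 + (-501)*a^3 + (595)*a^2 + (-334)*a + (77)) 0) = ((876)*a^9 + (573)*a^8 + (329)*a^7 + (-1918)*a^6 + (237)*a^5 + (-986)*a^4 + (1236)*a^3 + (1466)*a^2 + (-1757)*a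 + (564)) := by
    rw [hs11]
    simp only [WeierstrassCurve.Affine.addY, WeierstrassCurve.Affine.negAddY, WeierstrassCurve.Affine.addX, WeierstrassCurve.Affine.negY, ha1, ha2, ha3]
    linear_combination ((-7)*a^17 + (-123)*a^16 + (-490)*a^15 + (462)*a^14 + (327)*a^13 + (1659)*a^12 + (-4072)*a^11 + (3802)*a^10 + (-5363)*a^9 + (9165)*a^8 + (-11296)*a^7 + (14229)*a^6 + (-16443)*a^5 + (11862)*a^4 + (-4254)*a^3 + (763)*a^2 + (-137)*a + (-718)) * hpoly
  obtain ⟨h12, e12⟩ := aux_add h11 h1 hx11 ex12 ey12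
  have hx12 : (((14)*a^9 + (73)*a^8 + (-12)*a^7 + (10)*a^6 + (-173)*a^5 + (166)*a^4 + (-221)*a^3 + (337)*a^2 + (-213)*a + (53)) : K) ≠ 0 :=
    left_ne_zero_of_mul_eq_one (show (((14)*a^9 + (73)*a^8 + (-12)*a^7 + (10)*a^6 + (-173)*a^5 + (166)*a^4 + (-221)*a^3 + (337)*a^2 + (-213)*a + (53)) : K) * ((-3)*a^9 + (-3)*a^8 + (-6)*a^7 + (1)*a^6 + (-4)*a^5 + (9)*a^4 + (-2)*a^3 + (1)*a^2 + (2)*a + (-7)) = 1 by linear_combination ((-42)*a^8 + (-261)*a^7 + (-183)*a^6 + (-22)*a^5 + (287)*a^4 + (-233)*a^3 + (308)*a^2 + (109)*a + (-372)) * hpoly)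
  have hs12 : W.toAffine.slope ((14)*a^9 + (73)*a^8 + (-12)*a^7 + (10)*a^6 + (-173)*a^5 + (166)*a^4 + (-221)*a^3 + (337)*a^2 + (-213)*a + (53)) 0 ((876)*a^9 + (573)*a^8 + (329)*a^7 + (-1918)*a^6 + (237)*a^5 + (-986)*a^4 + (1236)*a^3 + (1466)*a^2 + (-1757)*a + (564)) 0 = ((3)*a^9 + (10)*a^8 + (1)*a^7 + (-19)*a^5 + (16)*a^4 + (-24)*a^3 + (39)*a^2 + (-25)*a + (6)) := by
    rw [WeierstrassCurve.Affine.slope_of_X_ne hx12, sub_zero, sub_zero, div_eq_iff hx12]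
    linear_combination ((-42)*a^8 + (-359)*a^7 + (-624)*a^6 + (609)*a^5 + (994)*a^4 + (78)*a^3 + (-2350)*a^2 + (1830)*a + (246)) * hpoly
  have ex13 : W.toAffine.addX ((14)*a^9 + (73)*a^8 + (-12)*a^7 + (10)*a^6 + (-173)*a^5 + (166)*a^4 + (-221)*a^3 + (337)*a^2 + (-213)*a + (53)) 0 (W.toAffine.slope ((14)*a^9 + (73)*a^8 + (-12)*a^7 + (10)*a^6 + (-173)*a^5 + (166)*a^4 + (-221)*a^3 + (337)*a^2 + (-213)*a + (53)) 0 ((876)*a^9 + (573)*a^8 + (329)*a^7 + (-1918)*a^6 + (237)*a^5 + (-986)*a^4 + (1236)*a^3 + (1466)*a^2 + (-1757)*a + (564)) 0) = ((6)*a^9 + (-7)*a^8 + (3)*a^7 + (-21)*a^6 + (30)*a^5 + (-33)*a^4 + (47)*a^3 + (-37)*a^2 + (14)*a + (-2)) := by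
    rw [hs12]; simp only [WeierstrassCurve.Affine.addX, ha1, ha2]
    linear_combination ((-15)*a^8 + (-38)*a^7 + (56)*a^6 + (53)*a^5 + (8)*a^4 + (-207)*a^3 + (187)*a^2 + (-14)*a + (-60)) * hpoly
  have ey13 : W.toAffine.addY ((14)*a^9 + (73)*a^8 + (-12)*a^7 + (10)*a^6 + (-173)*a^5 + (166)*a^4 + (-221)*a^3 + (337)*a^2 + (-213)*a + (53)) 0 ((876)*a^9 + (573)*a^8 + (329)*a^7 + (-1918)*a^6 + (237)*a^5 + (-986)*a^4 + (1236)*a^3 + (1466)*a^2 + (-1757)*a + (564)) (W.toAffine.slope ((14)*a^9 + (73)*a^8 + (-12)*a^7 + (10)*a^6 + (-173)*a^5 + (166)*a^4 + (-221)*a^3 + (337)*a^2 + (-213)*a + (53)) 0 ((876)*a^9 + (573)*a^8 + (329)*a^7 + (-1918)*a^6 + (237)*a^5 + (-986)*a^4 + (1236)*a^3 + (1466)*a^2 + (-1757)*a + (564)) 0) = ((-47)*a^9 + (-53)*a^8 + (-12)*a^7 + (89)*a^6 + (49)*a^5 + (-9)*a^4 + (17)*a^3 + (-186)*a^2 + (157)*a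 + (-45)) := by
    rw [hs12]
    simp only [WeierstrassCurve.Affine.addY, WeierstrassCurve.Affine.negAddY, WeierstrassCurve.Affine.addX, WeierstrassCurve.Affine.negY, ha1, ha2, ha3]
    linear_combination ((-75)*a^17 + (-130)*a^16 + (387)*a^15 + (167)*a^14 + (289)*a^13 + (-2242)*a^12 + (2517)*a^11 + (-2715)*a^10 + (5244)*a^9 + (-7171)*a^8 + (8766)*a^7 + (-10070)*a^6 + (9940)*a^5 + (-6372)*a^4 + (84)*a^3 + (3420)*a^2 + (-2302)*a + (-98)) * hpoly
  obtain ⟨h13, e13⟩ := aux_add h12 h1 hx12 ex13 ey13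
  have hx13 : (((6)*a^9 + (-7)*a^8 + (3)*a^7 + (-21)*a^6 + (30)*a^5 + (-33)*a^4 + (47)*a^3 + (-37)*a^2 + (14)*a + (-2)) : K) ≠ 0 :=
    left_ne_zero_of_mul_eq_one (show (((6)*a^9 + (-7)*a^8 + (3)*a^7 + (-21)*a^6 + (30)*a^5 + (-33)*a^4 + (47)*a^3 + (-37)*a^2 + (14)*a + (-2)) : K) * ((-2)*a^9 + (-3)*a^8 + (-7)*a^7 + (-2)*a^6 + (-3)*a^5 + (11)*a^4 + (1)*a^3 + (6)*a^2 + (-5)*a + (-5)) = 1 by linear_combination ((-12)*a^8 + (-4)*a^7 + (-3)*a^6 + (42)*a^5 + (8)*a^4 + (39)*a^3 + (-56)*a^2 + (-24)*a + (9)) * hpoly)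
  have hs13 : W.toAffine.slope ((6)*a^9 + (-7)*a^8 + (3)*a^7 + (-21)*a^6 + (30)*a^5 + (-33)*a^4 + (47)*a^3 + (-37)*a^2 + (14)*a + (-2)) 0 ((-47)*a^9 + (-53)*a^8 + (-12)*a^7 + (89)*a^6 + (49)*a^5 + (-9)*a^4 + (17)*a^3 + (-186)*a^2 + (157)*a + (-45)) 0 = ((3)*a^9 + (1)*a^7 + (-8)*a^6 + (6)*a^5 + (-7)*a^4 + (11)*a^3 + (-3)*a^2 + (-2)*a + (1)) := by
    rw [WeierstrassCurve.Affine.slope_of_X_ne hx13, sub_zero, sub_zero, div_eq_iff hx13]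
    linear_combination ((-18)*a^8 + (21)*a^7 + (21)*a^6 + (22)*a^5 + (-110)*a^4 + (58)*a^3 + (42)*a^2 + (-33)*a + (-43)) * hpoly
  have ex14 : W.toAffine.addX ((6)*a^9 + (-7)*a^8 + (3)*a^7 + (-21)*a^6 + (30)*a^5 + (-33)*a^4 + (47)*a^3 + (-37)*a^2 + (14)*a + (-2)) 0 (W.toAffine.slope ((6)*a^9 + (-7)*a^8 + (3)*a^7 + (-21)*a^6 + (30)*a^5 + (-33)*a^4 + (47)*a^3 + (-37)*a^2 + (14)*a + (-2)) 0 ((-47)*a^9 + (-53)*a^8 + (-12)*a^7 + (89)*a^6 + (49)*a^5 + (-9)*a^4 + (17)*a^3 + (-186)*a^2 + (157)*a + (-45)) 0) = ((28)*a^9 + (8)*a^8 + (13)*a^7 + (-68)*a^6 + (36)*a^5 + (-60)*a^4 + (78)*a^3 + (-3)*a^2 + (-27)*a + (11)) := by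
    rw [hs13]; simp only [WeierstrassCurve.Affine.addX, ha1, ha2]
    linear_combination ((-15)*a^8 + (-18)*a^7 + (16)*a^6 + (49)*a^5 + (-14)*a^4 + (-67)*a^3 + (33)*a^2 + (32)*a + (-33)) * hpoly
  have ey14 : W.toAffine.addY ((6)*a^9 + (-7)*a^8 + (3)*a^7 + (-21)*a^6 + (30)*a^5 + (-33)*a^4 + (47)*a^3 + (-37)*a^2 + (14)*a + (-2)) 0 ((-47)*a^9 + (-53)*a^8 + (-12)*a^7 + (89)*a^6 + (49)*a^5 + (-9)*a^4 + (17)*a^3 + (-186)*a^2 + (157)*a + (-45)) (W.toAffine.slope ((6)*a^9 + (-7)*a^8 + (3)*a^7 + (-21)*a^6 + (30)*a^5 + (-33)*a^4 + (47)*a^3 + (-37)*a^2 + (14)*a + (-2)) 0 ((-47)*a^9 + (-53)*a^8 + (-12)*a^7 + (89)*a^6 + (49)*a^5 + (-9)*a^4 + (17)*a^3 + (-186)*a^2 + (157)*a + (-45)) 0) = ((293)*a^9 + (-436)*a^8 + (283)*a^7 + (-1038)*a^6 + (1822)*a^5 + (-2120)*a^4 + (2784)*a^3 + (-2599)*a^2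 + (1234)*a + (-246)) := by
    rw [hs13]
    simp only [WeierstrassCurve.Affine.addY, WeierstrassCurve.Affine.negAddY, WeierstrassCurve.Affine.addX, WeierstrassCurve.Affine.negY, ha1, ha2, ha3]
    linear_combination ((-75)*a^17 + (-180)*a^16 + (-73)*a^15 + (407)*a^14 + (476)*a^13 + (-313)*a^12 + (-702)*a^11 + (-180)*a^10 + (557)*a^9 + (504)*a^8 + (336)*a^7 + (-810)*a^6 + (-1209)*a^5 + (1573)*a^4 + (427)*a^3 + (-1157)*a^2 + (285)*a + (202)) * hpoly
  obtain ⟨h14, e14⟩ := aux_add h13 h1 hx13 ex14 ey14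
  have hx14 : (((28)*a^9 + (8)*a^8 + (13)*a^7 + (-68)*a^6 + (36)*a^5 + (-60)*a^4 + (78)*a^3 + (-3)*a^2 + (-27)*a + (11)) : K) ≠ 0 :=
    left_ne_zero_of_mul_eq_one (show (((28)*a^9 + (8)*a^8 + (13)*a^7 + (-68)*a^6 + (36)*a^5 + (-60)*a^4 + (78)*a^3 + (-3)*a^2 + (-27)*a + (11)) : K) * ((-5)*a^9 + (-6)*a^8 + (-16)*a^7 + (-9)*a^5 + (28)*a^4 + (-9)*a^3 + (19)*a^2 + (-18)*a) = 1 by linear_combination ((-140)*a^8 + (-208)*a^7 + (-281)*a^6 + (130)*a^5 + (126)*a^4 + (425)*a^3 + (-106)*a^2 + (-202)*a + (-1)) * hpoly)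
  have hs14 : W.toAffine.slope ((28)*a^9 + (8)*a^8 + (13)*a^7 + (-68)*a^6 + (36)*a^5 + (-60)*a^4 + (78)*a^3 + (-3)*a^2 + (-27)*a + (11)) 0 ((293)*a^9 + (-436)*a^8 + (283)*a^7 + (-1038)*a^6 + (1822)*a^5 + (-2120)*a^4 + (2784)*a^3 + (-2599)*a^2 + (1234)*a + (-246)) 0 = ((4)*a^9 + (6)*a^8 + (-7)*a^6 + (-9)*a^5 + (6)*a^4 + (-8)*a^3 + (25)*a^2 + (-19)*a + (5)) := by
    rw [WeierstrassCurve.Affine.slope_of_X_ne hx14, sub_zero, sub_zero, div_eq_iff hx14]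
    linear_combination ((-112)*a^8 + (-200)*a^7 + (124)*a^6 + (454)*a^5 + (60)*a^4 + (-701)*a^3 + (231)*a^2 + (374)*a + (-301)) * hpoly
  have ex15 : W.toAffine.addX ((28)*a^9 + (8)*a^8 + (13)*a^7 + (-68)*a^6 + (36)*a^5 + (-60)*a^4 + (78)*a^3 + (-3)*a^2 + (-27)*a + (11)) 0 (W.toAffine.slope ((28)*a^9 + (8)*a^8 + (13)*a^7 + (-68)*a^6 + (36)*a^5 + (-60)*a^4 + (78)*a^3 + (-3)*a^2 + (-27)*a + (11)) 0 ((293)*a^9 + (-436)*a^8 + (283)*a^7 + (-1038)*a^6 + (1822)*a^5 + (-2120)*a^4 + (2784)*a^3 + (-2599)*a^2 + (1234)*a + (-246)) 0) = ((17)*a^9 + (-1)*a^8 + (10)*a^7 + (-45)*a^6 + (38)*a^5 + (-55)*a^4 + (70)*a^3 + (-32)*a^2 + (2)*a + (2)) := by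
    rw [hs14]; simp only [WeierstrassCurve.Affine.addX, ha1, ha2]
    linear_combination ((-16)*a^8 + (-24)*a^7 + (16)*a^6 + (40)*a^5 + (-10)*a^4 + (-78)*a^3 + (69)*a^2 + (6)*a + (-29)) * hpoly
  have ey15 : W.toAffine.addY ((28)*a^9 + (8)*a^8 + (13)*a^7 + (-68)*a^6 + (36)*a^5 + (-60)*a^4 + (78)*a^3 + (-3)*a^2 + (-27)*a + (11)) 0 ((293)*a^9 + (-436)*a^8 + (283)*a^7 + (-1038)*a^6 + (1822)*a^5 + (-2120)*a^4 + (2784)*a^3 + (-2599)*a^2 + (1234)*a + (-246)) (W.toAffine.slope ((28)*a^9 + (8)*a^8 + (13)*a^7 + (-68)*a^6 + (36)*a^5 + (-60)*a^4 + (78)*a^3 + (-3)*a^2 + (-27)*a + (11)) 0 ((293)*a^9 + (-436)*a^8 + (283)*a^7 + (-1038)*a^6 + (1822)*a^5 + (-2120)*a^4 + (2784)*a^3 + (-2599)*a^2 + (1234)*a + (-246)) 0) = ((12)*a^9 + (-161)*a^8 + (47)*a^7 + (-135)*a^6 + (468)*a^5 + (-487)*a^4 + (650)*a^3 + (-799)*a^2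 + (456)*a + (-106)) := by
    rw [hs14]
    simp only [WeierstrassCurve.Affine.addY, WeierstrassCurve.Affine.negAddY, WeierstrassCurve.Affine.addX, WeierstrassCurve.Affine.negY, ha1, ha2, ha3]
    linear_combination ((-64)*a^17 + (-96)*a^16 + (208)*a^14 + (64)*a^13 + (-336)*a^12 + (100)*a^11 + (-238)*a^10 + (696)*a^9 + (-647)*a^8 + (1329)*a^7 + (-1981)*a^6 + (1048)*a^5 + (-301)*a^4 + (313)*a^3 + (-15)*a^2 + (-456)*a + (413)) * hpoly
  obtain ⟨h15, e15⟩ := aux_add h14 h1 hx14 ex15 ey15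
  have hx15 : (((17)*a^9 + (-1)*a^8 + (10)*a^7 + (-45)*a^6 + (38)*a^5 + (-55)*a^4 + (70)*a^3 + (-32)*a^2 + (2)*a + (2)) : K) ≠ 0 :=
    left_ne_zero_of_mul_eq_one (show (((17)*a^9 + (-1)*a^8 + (10)*a^7 + (-45)*a^6 + (38)*a^5 + (-55)*a^4 + (70)*a^3 + (-32)*a^2 + (2)*a + (2)) : K) * ((-4)*a^9 + (-3)*a^8 + (-9)*a^7 + (5)*a^6 + (-6)*a^5 + (21)*a^4 + (-11)*a^3 + (11)*a^2 + (-11)*a + (-2)) = 1 by linear_combination ((-68)*a^8 + (-47)*a^7 + (-54)*a^6 + (134)*a^5 + (-43)*a^4 + (159)*a^3 + (-85)*a^2 + (-46)*a + (-5)) * hpoly)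
  have hs15 : W.toAffine.slope ((17)*a^9 + (-1)*a^8 + (10)*a^7 + (-45)*a^6 + (38)*a^5 + (-55)*a^4 + (70)*a^3 + (-32)*a^2 + (2)*a + (2)) 0 ((12)*a^9 + (-161)*a^8 + (47)*a^7 + (-135)*a^6 + (468)*a^5 + (-487)*a^4 + (650)*a^3 + (-799)*a^2 + (456)*a + (-106)) 0 = ((5)*a^9 + (3)*a^8 + (5)*a^7 + (-9)*a^6 + (6)*a^5 + (-11)*a^4 + (12)*a^3 + (-1)*a^2 + (-3)*a + (1)) := by
    rw [WeierstrassCurve.Affine.slope_of_X_ne hx15, sub_zero, sub_zero, div_eq_iff hx15]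
    linear_combination ((-85)*a^8 + (-46)*a^7 + (38)*a^6 + (190)*a^5 + (-175)*a^4 + (-54)*a^3 + (109)*a^2 + (28)*a + (-108)) * hpoly
  have ex16 : W.toAffine.addX ((17)*a^9 + (-1)*a^8 + (10)*a^7 + (-45)*a^6 + (38)*a^5 + (-55)*a^4 + (70)*a^3 + (-32)*a^2 + (2)*a + (2)) 0 (W.toAffine.slope ((17)*a^9 + (-1)*a^8 + (10)*a^7 + (-45)*a^6 + (38)*a^5 + (-55)*a^4 + (70)*a^3 + (-32)*a^2 + (2)*a + (2)) 0 ((12)*a^9 + (-161)*a^8 + (47)*a^7 + (-135)*a^6 + (468)*a^5 + (-487)*a^4 + (650)*a^3 + (-799)*a^2 + (456)*a + (-106)) 0) = ((17)*a^9 + (-1)*a^8 + (10)*a^7 + (-45)*a^6 + (38)*a^5 + (-55)*a^4 + (70)*a^3 + (-32)*a^2 + (2)*a + (2)) := by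
    rw [hs15]; simp only [WeierstrassCurve.Affine.addX, ha1, ha2]
    linear_combination ((-15)*a^8 + (-24)*a^7 + (11)*a^6 + (53)*a^5 + (6)*a^4 + (-68)*a^3 + (27)*a^2 + (37)*a + (-28)) * hpoly
  have ey16 : W.toAffine.addY ((17)*a^9 + (-1)*a^8 + (10)*a^7 + (-45)*a^6 + (38)*a^5 + (-55)*a^4 + (70)*a^3 + (-32)*a^2 + (2)*a + (2)) 0 ((12)*a^9 + (-161)*a^8 + (47)*a^7 + (-135)*a^6 + (468)*a^5 + (-487)*a^4 + (650)*a^3 + (-799)*a^2 + (456)*a + (-106)) (W.toAffine.slope ((17)*a^9 + (-1)*a^8 + (10)*a^7 + (-45)*a^6 + (38)*a^5 + (-55)*a^4 + (70)*a^3 + (-32)*a^2 + (2)*a + (2)) 0 ((12)*a^9 + (-161)*a^8 + (47)*a^7 + (-135)*a^6 + (468)*a^5 + (-487)*a^4 + (650)*a^3 + (-799)*a^2 + (456)*a + (-106)) 0) = ((98)*a^9 + (-279)*a^8 + (132)*a^7 + (-431)*a^6 + (980)*a^5 + (-1090)*a^4 + (1435)*a^3 + (-1527)*a^2 + (801)*a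 + (-175)) := by
    rw [hs15]
    simp only [WeierstrassCurve.Affine.addY, WeierstrassCurve.Affine.negAddY, WeierstrassCurve.Affine.addX, WeierstrassCurve.Affine.negY, ha1, ha2, ha3]
    linear_combination ((-45)*a^17 + (-117)*a^16 + (-24)*a^15 + (321)*a^14 + (394)*a^13 + (-265)*a^12 + (-586)*a^11 + (-138)*a^10 + (424)*a^9 + (442)*a^8 + (119)*a^7 + (-431)*a^6 + (-1126)*a^5 + (1407)*a^4 + (358)*a^3 + (-1144)*a^2 + (397)*a + (184)) * hpoly
  obtain ⟨h16, e16⟩ := aux_add h15 h1 hx15 ex16 ey16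
  have s2 : (2 : ℕ) • WeierstrassCurve.Affine.Point.some _ _ h1 = WeierstrassCurve.Affine.Point.some _ _ h2 := by
    rw [two_nsmul]; exact e2
  have s3 : (3 : ℕ) • WeierstrassCurve.Affine.Point.some _ _ h1 = WeierstrassCurve.Affine.Point.some _ _ h3 := by
    simp only [show (3 : ℕ) = 2 + 1 from by norm_num]
    rw [add_nsmul, one_nsmul, s2, e3]
  have s4 : (4 : ℕ) • WeierstrassCurve.Affine.Point.some _ _ h1 = WeierstrassCurve.Affine.Point.some _ _ h4 := by
    simp only [show (4 : ℕ) = 3 + 1 from by norm_num]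
    rw [add_nsmul, one_nsmul, s3, e4]
  have s5 : (5 : ℕ) • WeierstrassCurve.Affine.Point.some _ _ h1 = WeierstrassCurve.Affine.Point.some _ _ h5 := by
    simp only [show (5 : ℕ) = 4 + 1 from by norm_num]
    rw [add_nsmul, one_nsmul, s4, e5]
  have s6 : (6 : ℕ) • WeierstrassCurve.Affine.Point.some _ _ h1 = WeierstrassCurve.Affine.Point.some _ _ h6 := by
    simp only [show (6 : ℕ) = 5 + 1 from by norm_num]
    rw [add_nsmul, one_nsmul, s5, e6]
  have s7 : (7 : ℕ) • WeierstrassCurve.Affine.Point.some _ _ h1 = WeierstrassCurve.Affine.Point.some _ _ h7 := by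
    simp only [show (7 : ℕ) = 6 + 1 from by norm_num]
    rw [add_nsmul, one_nsmul, s6, e7]
  have s8 : (8 : ℕ) • WeierstrassCurve.Affine.Point.some _ _ h1 = WeierstrassCurve.Affine.Point.some _ _ h8 := by
    simp only [show (8 : ℕ) = 7 + 1 from by norm_num]
    rw [add_nsmul, one_nsmul, s7, e8]
  have s9 : (9 : ℕ) • WeierstrassCurve.Affine.Point.some _ _ h1 = WeierstrassCurve.Affine.Point.some _ _ h9 := by
    simp only [show (9 : ℕ) = 8 + 1 from by norm_num]
    rw [add_nsmul, one_nsmul, s8, e9]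
  have s10 : (10 : ℕ) • WeierstrassCurve.Affine.Point.some _ _ h1 = WeierstrassCurve.Affine.Point.some _ _ h10 := by
    simp only [show (10 : ℕ) = 9 + 1 from by norm_num]
    rw [add_nsmul, one_nsmul, s9, e10]
  have s11 : (11 : ℕ) • WeierstrassCurve.Affine.Point.some _ _ h1 = WeierstrassCurve.Affine.Point.some _ _ h11 := by
    simp only [show (11 : ℕ) = 10 + 1 from by norm_num]
    rw [add_nsmul, one_nsmul, s10, e11]
  have s12 : (12 : ℕ) • WeierstrassCurve.Affine.Point.some _ _ h1 = WeierstrassCurve.Affine.Point.some _ _ h12 := by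
    simp only [show (12 : ℕ) = 11 + 1 from by norm_num]
    rw [add_nsmul, one_nsmul, s11, e12]
  have s13 : (13 : ℕ) • WeierstrassCurve.Affine.Point.some _ _ h1 = WeierstrassCurve.Affine.Point.some _ _ h13 := by
    simp only [show (13 : ℕ) = 12 + 1 from by norm_num]
    rw [add_nsmul, one_nsmul, s12, e13]
  have s14 : (14 : ℕ) • WeierstrassCurve.Affine.Point.some _ _ h1 = WeierstrassCurve.Affine.Point.some _ _ h14 := by
    simp only [show (14 : ℕ) = 13 + 1 from by norm_num]
    rw [add_nsmul, one_nsmul, s13, e14]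
  have s15 : (15 : ℕ) • WeierstrassCurve.Affine.Point.some _ _ h1 = WeierstrassCurve.Affine.Point.some _ _ h15 := by
    simp only [show (15 : ℕ) = 14 + 1 from by norm_num]
    rw [add_nsmul, one_nsmul, s14, e15]
  have s16 : (16 : ℕ) • WeierstrassCurve.Affine.Point.some _ _ h1 = WeierstrassCurve.Affine.Point.some _ _ h16 := by
    simp only [show (16 : ℕ) = 15 + 1 from by norm_num]
    rw [add_nsmul, one_nsmul, s15, e16]
  have hyeq : (((12)*a^9 + (-161)*a^8 + (47)*a^7 + (-135)*a^6 + (468)*a^5 + (-487)*a^4 + (650)*a^3 + (-799)*a^2 + (456)*a + (-106)) : K) = W.toAffine.negY ((17)*a^9 + (-1)*a^8 + (10)*a^7 + (-45)*a^6 + (38)*a^5 + (-55)*a^4 + (70)*a^3 + (-32)*a^2 + (2)*a + (2)) ((98)*a^9 + (-279)*a^8 + (132)*a^7 + (-431)*a^6 + (980)*a^5 + (-1090)*a^4 + (1435)*a^3 + (-1527)*a^2 + (801)*a + (-175)) := by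
    simp only [WeierstrassCurve.Affine.negY, ha1, ha3]
    linear_combination ((-136)*a^8 + (-94)*a^7 + (130)*a^6 + (356)*a^5 + (-258)*a^4 + (-302)*a^3 + (324)*a^2 + (78)*a + (-268)) * hpoly
  have s31 : (31 : ℕ) • WeierstrassCurve.Affine.Point.some _ _ h1 = 0 := by
    simp only [show (31 : ℕ) = 15 + 16 from by norm_num]
    rw [add_nsmul, s15, s16,
      WeierstrassCurve.Affine.Point.add_of_Y_eq rfl hyeq]
  haveI : Fact (Nat.Prime 31) := ⟨by norm_num⟩
  exact ⟨h1, addOrderOf_eq_prime s31 (WeierstrassCurve.Affine.Point.some_ne_zero h1)⟩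
end
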